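/- arXiv:2306.01142 — 11 statements merged into one kernel-verified Lean document; each statement's English description precedes it below -/
import Mathlib

section
/- Let R be a commutative ring of characteristic 2 and let x, y ∈ R satisfy x^{q_0}(x^q + x) = y^q + y. Then the element v := y^{q̄} + x^{q̄+1} satisfies v^q + v = x^{q̄}(x^q + x). -/
private lemma frob2 {R : Type*} [CommRing R] (h2 : (2 : R) = 0) (n : ℕ) (a b : R) :
    (a + b) ^ (2 ^ n) = a ^ (2 ^ n) + b ^ (2 ^ n) := by
  induction n with
  | zero => simp
  | succ n ih =>
    rw [pow_succ, pow_mul, pow_mul, pow_mul, ih]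
    linear_combination (a ^ (2 ^ n) * b ^ (2 ^ n)) * h2

/-- if `x^{q_0}(x^q + x) = y^q + y` in a commutative ring of
characteristic 2, then `v := y^{q̄} + x^{q̄+1}` satisfies `v^q + v = x^{q̄}(x^q + x)`. -/
theorem stmt_0 (R : Type*) [CommRing R] (h2 : (2 : R) = 0)
    (s h q q0 qbar : ℕ) (hh : 0 < h) (hs : 2 * h < s)
    (hq : q = 2 ^ s) (hq0 : q0 = 2 ^ h) (hqbar : qbar = 2 ^ (s - h))
    (x y : R) (hcurve : x ^ q0 * (x ^ q + x) = y ^ q + y) :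
    (y ^ qbar + x ^ (qbar + 1)) ^ q + (y ^ qbar + x ^ (qbar + 1))
      = x ^ qbar * (x ^ q + x) := by
  subst hq hq0 hqbar
  have hqq : (2:ℕ) ^ h * 2 ^ (s - h) = 2 ^ s := by
    rw [← pow_add]; congr 1; omega
  have key := congrArg (· ^ (2 ^ (s - h))) hcurve
  simp only [mul_pow, frob2 h2] at key
  rw [← pow_mul, hqq] at key
  rw [frob2 h2]
  rw [← pow_mul y (2^(s-h)) (2^s), Nat.mul_comm, pow_mul y (2^s) (2^(s-h))]
  -- key : x ^ 2^s * ((x^(2^s))^(2^(s-h)) + x^(2^(s-h))) = (y^(2^s))^(2^(s-h)) + y^(2^(s-h))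
  linear_combination key + (y ^ (2 ^ (s - h)) + x ^ ((2^(s-h)+1) * 2^s) + y ^ (2^s * 2^(s-h)) - x^(2^s) * x^(2^s * 2^(s-h)) - x^(2^s) * x^(2^(s-h))) * h2
end

section
/- Let R be a commutative ring of characteristic 2 and let x, y ∈ R satisfy x^{q_0}(x^q + x) = y^q + y. Then (x^{n+q̄})^{q_0} + x^{n q_0 + 1} = (y^{q̄} x^{n−1})^{q_0} + y·x^{q_0(n−1)}. -/
/-- if `x^{q_0}(x^q + x) = y^q + y` in a commutative ring of
characteristic 2, then `(x^{n+q̄})^{q_0} + x^{n q_0 + 1}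
= (y^{q̄} x^{n−1})^{q_0} + y·x^{q_0(n−1)}`. -/
theorem stmt_1 (R : Type*) [CommRing R] (h2 : (2 : R) = 0)
    (s h q q0 qbar n : ℕ) (hh : 0 < h) (hs : 2 * h < s)
    (hq : q = 2 ^ s) (hq0 : q0 = 2 ^ h) (hqbar : qbar = 2 ^ (s - h))
    (hn : n = 2 ^ (s - 2 * h))
    (x y : R) (hcurve : x ^ q0 * (x ^ q + x) = y ^ q + y) :
    (x ^ (n + qbar)) ^ q0 + x ^ (n * q0 + 1)
      = (y ^ qbar * x ^ (n - 1)) ^ q0 + y * x ^ (q0 * (n - 1)) := by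
  have hA : qbar * q0 = q := by
    subst hq hq0 hqbar; rw [← pow_add]; congr 1; omega
  obtain ⟨m, rfl⟩ : ∃ m, n = m + 1 := by
    refine ⟨n - 1, ?_⟩
    have : 0 < n := hn ▸ Nat.two_pow_pos _
    omega
  rw [show m + 1 - 1 = m by omega]
  rw [← pow_mul, mul_pow, ← pow_mul, ← pow_mul, hA]
  rw [show (m + 1 + qbar) * q0 = q0 * m + q0 + q by rw [← hA]; ring,
      show (m + 1) * q0 + 1 = q0 * m + q0 + 1 by ring,
      show m * q0 = q0 * m by ring]
  rw [pow_add, pow_add, pow_add, pow_add, pow_one]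
  linear_combination x ^ (q0 * m) * hcurve
end

section
/- Let R be a commutative ring of characteristic 2 and let x, y ∈ R satisfy x^{q_0}(x^q + x) = y^q + y. Define v := y^{q̄} + x^{q̄+1} and w := y^{q̄} x^{n−1} + v^{q̄}. Then w^{q_0} = y·x^{q_0(n−1)} + v. -/
/-- if `x^{q_0}(x^q + x) = y^q + y` in a commutative ring of
characteristic 2, and `v := y^{q̄} + x^{q̄+1}`, `w := y^{q̄} x^{n−1} + v^{q̄}`,
then `w^{q_0} = y·x^{q_0(n−1)} + v`. -/
theorem stmt_2 (R : Type*) [CommRing R] (h2 : (2 : R) = 0)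
    (s h q q0 qbar n : ℕ) (hh : 0 < h) (hs : 2 * h < s)
    (hq : q = 2 ^ s) (hq0 : q0 = 2 ^ h) (hqbar : qbar = 2 ^ (s - h))
    (hn : n = 2 ^ (s - 2 * h))
    (x y v w : R) (hcurve : x ^ q0 * (x ^ q + x) = y ^ q + y)
    (hv : v = y ^ qbar + x ^ (qbar + 1))
    (hw : w = y ^ qbar * x ^ (n - 1) + v ^ qbar) :
    w ^ q0 = y * x ^ (q0 * (n - 1)) + v := by
  have fd : ∀ (k : ℕ) (a b : R), (a + b) ^ (2 ^ k) = a ^ (2 ^ k) + b ^ (2 ^ k) := by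
    intro k
    induction k with
    | zero => intro a b; simp
    | succ k ih =>
      intro a b
      rw [pow_succ, pow_mul, pow_mul, pow_mul, ih]
      linear_combination (a ^ 2 ^ k * b ^ 2 ^ k) * h2
  have fdq0 : ∀ a b : R, (a + b) ^ q0 = a ^ q0 + b ^ q0 := by rw [hq0]; exact fd h
  have fdqbar : ∀ a b : R, (a + b) ^ qbar = a ^ qbar + b ^ qbar := by
    rw [hqbar]; exact fd (s - h)
  have fdq : ∀ a b : R, (a + b) ^ q = a ^ q + b ^ q := by rw [hq]; exact fd s
  have hq0qbar : q0 * qbar = q := by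
    subst hq hq0 hqbar; rw [← pow_add]; congr 1; omega
  have hq0n : q0 * n = qbar := by
    subst hqbar hq0 hn; rw [← pow_add]; congr 1; omega
  obtain ⟨m, hm⟩ : ∃ m, n = m + 1 :=
    ⟨n - 1, by subst hn; have := Nat.one_le_two_pow (n := s - 2 * h); omega⟩
  subst hm
  have hyq : y ^ q = x ^ q0 * (x ^ q + x) + y := by linear_combination -hcurve - y * h2
  have hvq : v ^ q = x ^ (q + qbar) + y ^ qbar := by
    rw [hv, fdq, ← pow_mul, mul_comm qbar q, pow_mul, hyq, fdqbar, mul_pow, fdqbar,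
      ← pow_mul, hq0qbar]
    linear_combination (x ^ (q * qbar + q)) * h2
  have hqb2 : qbar = q0 * m + q0 := by rw [← hq0n]; ring
  rw [hw, Nat.add_sub_cancel, fdq0, mul_pow, ← pow_mul, ← pow_mul, ← pow_mul,
    mul_comm qbar q0, hq0qbar, hvq, hyq, hv, hqb2]
  linear_combination (x ^ (q + q0 * m + q0)) * h2
end

section
/- Let h be a positive integer, q_0 = 2^h, q = 2^{2h} = q_0^2, and let F be the finite field with q elements. Then in the polynomial ring F[X,Y] the following factorization holds: X^{q_0}(X^q + X) + Y^q + Y = ∏_{α ∈ F, α^{q_0} = α} (X^{q_0+1} + Y^{q_0} + Y + α), where the product ranges over the q_0 elements α of F satisfying α^{q_0} = α. In particular, for 2h = s the curve X^{q_0}(X^q+X) = Y^q+Y is reducible. -/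
open Polynomial in
/-- If `X^{q0} - X` divides `X^{card F} - X`, then it factors as the product of
`X - α` over the elements `α` with `α^{q0} = α`. -/
theorem stmt5_aux (F : Type*) [Field F] [Fintype F] [DecidableEq F]
    (q0 : ℕ) (hq0 : 1 < q0)
    (hdvd : (X ^ q0 - X : F[X]) ∣ (X ^ Fintype.card F - X)) :
    (X ^ q0 - X : F[X])
      = ∏ α ∈ Finset.univ.filter (fun α : F => α ^ q0 = α), (X - C α) := by
  have hmon : (X ^ q0 - X : F[X]).Monic := by
    apply monic_X_pow_sub
    rw [degree_X]
    exact_mod_cast hq0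
  have hne : (X ^ q0 - X : F[X]) ≠ 0 := hmon.ne_zero
  have hbigne : (X ^ Fintype.card F - X : F[X]) ≠ 0 :=
    FiniteField.X_pow_card_sub_X_ne_zero F Fintype.one_lt_card
  have hbigsplits : (X ^ Fintype.card F - X : F[X]).Splits := by
    rw [splits_iff_card_roots, FiniteField.roots_X_pow_card_sub_X,
      FiniteField.X_pow_card_sub_X_natDegree_eq F Fintype.one_lt_card]
    rfl
  have hsplits : (X ^ q0 - X : F[X]).Splits :=
    hbigsplits.of_dvd hbigne hdvd
  have hnodup : (X ^ q0 - X : F[X]).roots.Nodup := by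
    have hle : (X ^ q0 - X : F[X]).roots ≤ (X ^ Fintype.card F - X : F[X]).roots :=
      Polynomial.roots.le_of_dvd hbigne hdvd
    rw [FiniteField.roots_X_pow_card_sub_X] at hle
    exact Multiset.nodup_of_le hle Finset.univ.nodup
  have hfin : (X ^ q0 - X : F[X]).roots.toFinset
      = Finset.univ.filter (fun α : F => α ^ q0 = α) := by
    ext α
    simp only [Multiset.mem_toFinset, mem_roots hne, IsRoot.def, eval_sub, eval_pow,
      eval_X, sub_eq_zero, Finset.mem_filter, Finset.mem_univ, true_and]
  calc (X ^ q0 - X : F[X])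
      = ((X ^ q0 - X : F[X]).roots.map fun a => X - C a).prod :=
        hsplits.eq_prod_roots_of_monic hmon
    _ = ∏ α ∈ (X ^ q0 - X : F[X]).roots.toFinset, (X - C α) := by
        rw [Finset.prod_eq_multiset_prod, Multiset.toFinset_val,
          Multiset.Nodup.dedup hnodup]
    _ = _ := by rw [hfin]

/-- for `q = 2^{2h}`, `q_0 = 2^h`, and `F` the field with `q`
elements, in `F[X,Y]` one has
`X^{q_0}(X^q + X) + Y^q + Y = ∏_{α ∈ F, α^{q_0} = α} (X^{q_0+1} + Y^{q_0} + Y + α)`;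
in particular the curve `X^{q_0}(X^q+X) = Y^q+Y` is reducible for `2h = s`. -/
theorem stmt_5 (h q q0 : ℕ) (hh : 0 < h) (hq : q = 2 ^ (2 * h)) (hq0 : q0 = 2 ^ h)
    (F : Type*) [Field F] [Fintype F] [DecidableEq F] (hF : Fintype.card F = q) :
    (MvPolynomial.X 0 ^ q0 * (MvPolynomial.X 0 ^ q + MvPolynomial.X 0)
        + MvPolynomial.X 1 ^ q + MvPolynomial.X 1 : MvPolynomial (Fin 2) F)
      = ∏ α ∈ Finset.univ.filter (fun α : F => α ^ q0 = α),
          (MvPolynomial.X 0 ^ (q0 + 1) + MvPolynomial.X 1 ^ q0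
            + MvPolynomial.X 1 + MvPolynomial.C α)
    ∧ ¬ Irreducible
        (MvPolynomial.X 0 ^ q0 * (MvPolynomial.X 0 ^ q + MvPolynomial.X 0)
          + MvPolynomial.X 1 ^ q + MvPolynomial.X 1 : MvPolynomial (Fin 2) F) := by
  have hq01 : 1 < q0 := by
    rw [hq0]; exact Nat.one_lt_two_pow hh.ne'
  have hqq : q = q0 * q0 := by
    rw [hq, hq0, two_mul, pow_add]
  -- characteristic 2
  have hchar : CharP F 2 := by
    obtain ⟨p, hp⟩ := CharP.exists F
    obtain ⟨n, hprime, hcard⟩ := FiniteField.card F p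
    have : p = 2 := by
      have : p ∣ 2 ^ (2 * h) := by
        rw [← hq, ← hF, hcard]
        exact dvd_pow_self p n.2.ne'
      have := hprime.dvd_of_dvd_pow this
      exact (Nat.prime_dvd_prime_iff_eq hprime Nat.prime_two).mp this
    rwa [this] at hp
  haveI := hchar
  -- divisibility X^{q0} - X ∣ X^q - X
  have hdvd : (Polynomial.X ^ q0 - Polynomial.X : Polynomial F)
      ∣ (Polynomial.X ^ Fintype.card F - Polynomial.X) := by
    refine ⟨(Polynomial.X ^ q0 - Polynomial.X) ^ (q0 - 1) + 1, ?_⟩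
    have : ((Polynomial.X : Polynomial F) ^ q0 - Polynomial.X) ^ q0
        = Polynomial.X ^ (q0 * q0) - Polynomial.X ^ q0 := by
      rw [hq0, sub_pow_char_pow, ← pow_mul]
    have e1 : q0 - 1 + 1 = q0 := by omega
    rw [mul_add, mul_one, ← pow_succ', e1, this, hF, hqq]
    ring
  have key := stmt5_aux F q0 hq01 hdvd
  -- move to MvPolynomial via aeval
  set T : MvPolynomial (Fin 2) F :=
    MvPolynomial.X 0 ^ (q0 + 1) + MvPolynomial.X 1 ^ q0 + MvPolynomial.X 1 with hT
  have happ := congrArg (Polynomial.aeval T) key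
  simp only [map_prod, map_sub, map_pow, Polynomial.aeval_X, Polynomial.aeval_C,
    MvPolynomial.algebraMap_eq] at happ
  have hsub : ∀ α : F, T - MvPolynomial.C α
      = MvPolynomial.X 0 ^ (q0 + 1) + MvPolynomial.X 1 ^ q0
        + MvPolynomial.X 1 + MvPolynomial.C α := by
    intro α
    rw [CharTwo.sub_eq_add, hT]
  have hTpow : T ^ q0 - T
      = (MvPolynomial.X 0 ^ q0 * (MvPolynomial.X 0 ^ q + MvPolynomial.X 0)
          + MvPolynomial.X 1 ^ q + MvPolynomial.X 1 : MvPolynomial (Fin 2) F) := by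
    have h2 : (2 : MvPolynomial (Fin 2) F) = 0 := by
      exact_mod_cast CharP.cast_eq_zero (MvPolynomial (Fin 2) F) 2
    have hpow : ∀ x y : MvPolynomial (Fin 2) F, (x + y) ^ q0 = x ^ q0 + y ^ q0 := by
      rw [hq0]; intro x y; exact add_pow_char_pow x y 2 h
    rw [hT, CharTwo.sub_eq_add, hpow, hpow, ← pow_mul, ← pow_mul, hqq]
    linear_combination (MvPolynomial.X 1 ^ q0 : MvPolynomial (Fin 2) F) * h2
  have hprod :
      (MvPolynomial.X 0 ^ q0 * (MvPolynomial.X 0 ^ q + MvPolynomial.X 0)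
        + MvPolynomial.X 1 ^ q + MvPolynomial.X 1 : MvPolynomial (Fin 2) F)
      = ∏ α ∈ Finset.univ.filter (fun α : F => α ^ q0 = α),
          (MvPolynomial.X 0 ^ (q0 + 1) + MvPolynomial.X 1 ^ q0
            + MvPolynomial.X 1 + MvPolynomial.C α) := by
    rw [← hTpow, happ]
    exact Finset.prod_congr rfl fun α _ => hsub α
  refine ⟨hprod, ?_⟩
  -- each factor is not a unit
  have hnotunit : ∀ α : F,
      ¬ IsUnit (MvPolynomial.X 0 ^ (q0 + 1) + MvPolynomial.X 1 ^ q0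
        + MvPolynomial.X 1 + MvPolynomial.C α : MvPolynomial (Fin 2) F) := by
    intro α hu
    have := hu.map (MvPolynomial.aeval ![Polynomial.X, 0] :
      MvPolynomial (Fin 2) F →ₐ[F] Polynomial F)
    simp only [map_add, map_pow, MvPolynomial.aeval_X, MvPolynomial.aeval_C,
      Matrix.cons_val_zero, Matrix.cons_val_one, Matrix.head_cons,
      zero_pow (by omega : q0 ≠ 0), add_zero, Polynomial.algebraMap_eq] at this
    exact Polynomial.not_isUnit_of_natDegree_pos _
      (by rw [Polynomial.natDegree_X_pow_add_C]; omega) this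
  have h0mem : (0 : F) ∈ Finset.univ.filter (fun α : F => α ^ q0 = α) := by
    simp [zero_pow (by omega : q0 ≠ 0)]
  have h1mem : (1 : F) ∈ (Finset.univ.filter (fun α : F => α ^ q0 = α)).erase 0 := by
    simp
  intro hirr
  rw [hprod, ← Finset.mul_prod_erase _ _ h0mem] at hirr
  rcases hirr.isUnit_or_isUnit rfl with hu | hu
  · exact hnotunit 0 hu
  · exact hnotunit 1 (isUnit_of_dvd_unit (Finset.dvd_prod_of_mem
      (fun α : F => MvPolynomial.X 0 ^ (q0 + 1) + MvPolynomial.X 1 ^ q0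
        + MvPolynomial.X 1 + MvPolynomial.C α) h1mem) hu)
end

section
/- Let i be a positive integer and let L be the finite field with q^i elements. For every a ∈ L with a^q = a, the number of y ∈ L satisfying y^q + y = a^{q_0}(a^q + a) is exactly q. -/
open Polynomial

/-- In characteristic 2, `X^q - X` divides `X^(q^(j+1)) - X` when `q = 2^s`. -/
lemma aux_dvd (L : Type*) [Field L] [CharP L 2] (s : ℕ) (j : ℕ) :
    (X ^ (2 ^ s) - X : L[X]) ∣ (X ^ ((2 ^ s) ^ (j + 1)) - X) := by
  induction j with
  | zero => simp
  | succ j ih =>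
    have key : (X ^ ((2 ^ s) ^ (j + 2)) - X : L[X])
        = (X ^ ((2 ^ s) ^ (j + 1)) - X) ^ (2 ^ s) + (X ^ (2 ^ s) - X) := by
      have e : (2 ^ s) ^ (j + 2) = (2 ^ s) ^ (j + 1) * 2 ^ s := by ring
      rw [sub_pow_char_pow (R := L[X]) (p := 2), ← pow_mul (X : L[X]), ← e]
      ring
    rw [key]
    exact dvd_add (dvd_pow ih (by positivity)) dvd_rfl

/-- over the finite field `L` with `q^i` elements, for every `a ∈ L`
with `a^q = a`, the equation `y^q + y = a^{q_0}(a^q + a)` has exactly `q`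
solutions `y ∈ L`. -/
theorem stmt_8 (s h q q0 i : ℕ) (hh : 0 < h) (hs : 2 * h < s)
    (hq : q = 2 ^ s) (hq0 : q0 = 2 ^ h) (hi : 0 < i)
    (L : Type*) [Field L] [Fintype L] (hL : Fintype.card L = q ^ i)
    (a : L) (ha : a ^ q = a) :
    Nat.card {y : L // y ^ q + y = a ^ q0 * (a ^ q + a)} = q := by
  classical
  have hs0 : 0 < s := lt_of_le_of_lt (Nat.zero_le _) hs
  have hq1 : 1 < q := by rw [hq]; exact Nat.one_lt_two_pow hs0.ne'
  -- characteristic 2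
  have hp : (ringChar L).Prime := CharP.char_is_prime L (ringChar L)
  obtain ⟨n, hn⟩ := FiniteField.card L (ringChar L)
  have hdvd2 : ringChar L ∣ 2 := by
    have h1 : ringChar L ∣ 2 ^ (s * i) := by
      have e : (2 : ℕ) ^ (s * i) = ringChar L ^ (n : ℕ) := by
        rw [← hn.2, hL, hq, ← pow_mul]
      rw [e]
      exact dvd_pow_self _ (by exact_mod_cast n.2.ne')
    exact hp.dvd_of_dvd_pow h1
  have hchar2 : ringChar L = 2 :=
    (Nat.prime_dvd_prime_iff_eq hp Nat.prime_two).mp hdvd2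
  haveI : CharP L 2 := hchar2 ▸ ringChar.charP L
  -- the RHS is zero
  have hrhs : a ^ q0 * (a ^ q + a) = 0 := by
    rw [ha, CharTwo.add_self_eq_zero, mul_zero]
  -- the polynomial f = X^q - X
  set f : L[X] := X ^ q - X with hf
  have hfne : f ≠ 0 := FiniteField.X_pow_card_sub_X_ne_zero L hq1
  have hfdeg : f.natDegree = q := FiniteField.X_pow_card_sub_X_natDegree_eq L hq1
  have hfsep : f.Separable := by
    refine galois_poly_separable 2 q ?_
    rw [hq]; exact dvd_pow_self 2 hs0.ne'
  -- g = X^(q^i) - X splits with all of L as roots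
  set g : L[X] := X ^ (q ^ i) - X with hg
  have hgroots : g.roots = Finset.univ.val := by
    rw [hg, ← hL]; exact FiniteField.roots_X_pow_card_sub_X L
  have hgne : g ≠ 0 := by
    rw [hg, ← hL]
    exact FiniteField.X_pow_card_sub_X_ne_zero L Fintype.one_lt_card
  have hgdeg : g.natDegree = q ^ i := by
    rw [hg]
    exact FiniteField.X_pow_card_sub_X_natDegree_eq L
      (Nat.one_lt_pow hi.ne' hq1)
  have hgsplits : Splits g := by
    rw [splits_iff_card_roots, hgroots, hgdeg, ← Finset.card_def, Finset.card_univ, hL]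
  -- f divides g
  have hfg : f ∣ g := by
    have := aux_dvd L s (i - 1)
    rwa [Nat.sub_add_cancel hi, ← hq, ← hf, ← hg] at this
  -- f splits, so it has natDegree-many roots with multiplicity
  have hfsplits : Splits f :=
    hgsplits.of_dvd hgne hfg
  have hcard : Multiset.card f.roots = q := by
    rw [← hfdeg, ← splits_iff_card_roots]; exact hfsplits
  have hnodup : f.roots.Nodup := nodup_roots hfsep
  -- identify the solution set with the root set of f
  have hset : {y : L | y ^ q + y = a ^ q0 * (a ^ q + a)} = (f.roots.toFinset : Set L) := by
    ext y
    simp only [Set.mem_setOf_eq, hrhs, Finset.coe_sort_coe, Multiset.mem_toFinset,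
      Finset.mem_coe, mem_roots (show (X ^ q - X : L[X]) ≠ 0 from hfne), IsRoot.def, hf, eval_sub, eval_pow, eval_X]
    rw [CharTwo.sub_eq_add]
  have : Nat.card {y : L // y ^ q + y = a ^ q0 * (a ^ q + a)}
      = Set.ncard {y : L | y ^ q + y = a ^ q0 * (a ^ q + a)} := rfl
  rw [this, hset, Set.ncard_coe_finset, Multiset.toFinset_card_of_nodup hnodup, hcard]
end

section
/- The map from {0,1,…,n−1} × {0,1,…,q_0−1} × {0,1,…,q_0−1} to the integers modulo q sending (t_1, t_2, t_3) to the residue class of t_1(q+q_0) + t_2(q+q̄) + t_3(q(n−1)+q̄+1) modulo q is a bijection. Equivalently, the set Ā := { t_1(q+q_0) + t_2(q+q̄) + t_3(q(n−1)+q̄+1) : 0 ≤ t_1 ≤ n−1, 0 ≤ t_2 ≤ q_0−1, 0 ≤ t_3 ≤ q_0−1 } is a complete set of representatives for the congruence classes of ℤ modulo q. -/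
/-- the map `(t₁,t₂,t₃) ↦ t₁(q+q₀) + t₂(q+q̄) + t₃(q(n−1)+q̄+1)`
from `{0,…,n−1} × {0,…,q₀−1} × {0,…,q₀−1}` to `ℤ/qℤ` is a bijection, i.e. the
set `Ā` is a complete set of representatives modulo `q`. -/
theorem stmt_10 (s h q q0 qbar n : ℕ) (hh : 0 < h) (hs : 2 * h < s)
    (hq : q = 2 ^ s) (hq0 : q0 = 2 ^ h) (hqbar : qbar = 2 ^ (s - h))
    (hn : n = 2 ^ (s - 2 * h)) :
    Function.Bijective (fun t : Fin n × Fin q0 × Fin q0 =>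
      (((t.1 : ℕ) * (q + q0) + (t.2.1 : ℕ) * (q + qbar)
        + (t.2.2 : ℕ) * (q * (n - 1) + qbar + 1) : ℕ) : ZMod q)) := by
  have hq0pos : 0 < q0 := by rw [hq0]; positivity
  have hnpos : 0 < n := by rw [hn]; positivity
  have hqpos : 0 < q := by rw [hq]; positivity
  have hqbarpos : 0 < qbar := by rw [hqbar]; positivity
  have h1 : q = q0 * qbar := by
    rw [hq, hq0, hqbar, ← pow_add]; congr 1; omega
  have h2 : qbar = q0 * n := by
    rw [hqbar, hq0, hn, ← pow_add]; congr 1; omega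
  have hcard : n * (q0 * q0) = q := by
    rw [hq, hq0, hn, ← pow_add, ← pow_add]; congr 1; omega
  -- decomposition of the value
  have hdecomp : ∀ a b c : ℕ,
      a * (q + q0) + b * (q + qbar) + c * (q * (n - 1) + qbar + 1)
        = (c + q0 * a + qbar * (b + c)) + q * (a + b + c * (n - 1)) := by
    intro a b c; ring
  have hqc : ∀ x : ℕ, qbar * x = q * (x / q0) + qbar * (x % q0) := by
    intro x
    conv_lhs => rw [← Nat.div_add_mod x q0]
    rw [h1]; ring
  -- normal form of the value mod q
  have norm : ∀ a b c : ℕ, a < n → b < q0 → c < q0 →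
      (a * (q + q0) + b * (q + qbar) + c * (q * (n - 1) + qbar + 1)) % q
        = c + q0 * a + qbar * ((b + c) % q0) := by
    intro a b c ha hb hc
    rw [hdecomp, Nat.add_mul_mod_self_left]
    have hlt1 : c + q0 * a < qbar := by
      have h3 : q0 * (a + 1) ≤ q0 * n := Nat.mul_le_mul_left _ ha
      have h4 : q0 * (a + 1) = q0 * a + q0 := by ring
      rw [h2]; linarith
    have hlt2 : qbar * ((b + c) % q0) ≤ qbar * (q0 - 1) := by
      apply Nat.mul_le_mul_left
      have := Nat.mod_lt (b + c) hq0pos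
      omega
    have hlt3 : qbar * (q0 - 1) + qbar = q := by
      have : qbar * (q0 - 1) + qbar * 1 = qbar * (q0 - 1 + 1) := by ring
      rw [h1]; have hq01 : q0 - 1 + 1 = q0 := by omega
      calc qbar * (q0 - 1) + qbar = qbar * (q0 - 1 + 1) := by ring
        _ = qbar * q0 := by rw [hq01]
        _ = q0 * qbar := by ring
    have hval : c + q0 * a + qbar * (b + c)
        = (c + q0 * a + qbar * ((b + c) % q0)) + q * ((b + c) / q0) := by
      rw [hqc (b + c)]; ring
    rw [hval, Nat.add_mul_mod_self_left]
    exact Nat.mod_eq_of_lt (by omega)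
  -- uniqueness of the mixed-radix representation
  have uniq : ∀ c a r c' a' r' : ℕ, c < q0 → a < n → r < q0 → c' < q0 → a' < n → r' < q0 →
      c + q0 * a + qbar * r = c' + q0 * a' + qbar * r' → c = c' ∧ a = a' ∧ r = r' := by
    intro c a r c' a' r' hc ha hr hc' ha' hr' hE
    have hE' : c + q0 * (a + n * r) = c' + q0 * (a' + n * r') := by
      rw [h2] at hE
      have e1 : q0 * (a + n * r) = q0 * a + q0 * n * r := by ring
      have e2 : q0 * (a' + n * r') = q0 * a' + q0 * n * r' := by ring
      rw [e1, e2]; linarith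
    have m1 : c = c' := by
      have h := congrArg (· % q0) hE'
      simpa [Nat.add_mul_mod_self_left, Nat.mod_eq_of_lt hc, Nat.mod_eq_of_lt hc'] using h
    subst m1
    have hE'' : a + n * r = a' + n * r' := by
      have := Nat.add_left_cancel hE'
      exact Nat.eq_of_mul_eq_mul_left hq0pos this
    have m2 : a = a' := by
      have h := congrArg (· % n) hE''
      simpa [Nat.add_mul_mod_self_left, Nat.mod_eq_of_lt ha, Nat.mod_eq_of_lt ha'] using h
    subst m2
    have m3 : r = r' := by
      have := Nat.add_left_cancel hE''
      exact Nat.eq_of_mul_eq_mul_left hnpos this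
    exact ⟨rfl, rfl, m3⟩
  haveI : NeZero q := ⟨hqpos.ne'⟩
  rw [Fintype.bijective_iff_injective_and_card]
  constructor
  · rintro ⟨a, b, c⟩ ⟨a', b', c'⟩ hE
    simp only at hE
    rw [ZMod.natCast_eq_natCast_iff] at hE
    have hE2 : (↑a * (q + q0) + ↑b * (q + qbar) + ↑c * (q * (n - 1) + qbar + 1)) % q
        = (↑a' * (q + q0) + ↑b' * (q + qbar) + ↑c' * (q * (n - 1) + qbar + 1)) % q := hE
    rw [norm a b c a.isLt b.isLt c.isLt, norm a' b' c' a'.isLt b'.isLt c'.isLt] at hE2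
    obtain ⟨e3, e1, e2⟩ := uniq _ _ _ _ _ _ c.isLt a.isLt
      (Nat.mod_lt _ hq0pos) c'.isLt a'.isLt (Nat.mod_lt _ hq0pos) hE2
    have eb : (b : ℕ) = b' := by
      rw [e3] at e2
      have hmeq : (b : ℕ) + c' ≡ (b' : ℕ) + c' [MOD q0] := by
        unfold Nat.ModEq; exact e2
      have := (Nat.ModEq.add_right_cancel' _ hmeq)
      have hb := Nat.mod_eq_of_lt b.isLt
      have hb' := Nat.mod_eq_of_lt b'.isLt
      unfold Nat.ModEq at this
      omega
    simp only [Prod.mk.injEq, Fin.ext_iff]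
    exact ⟨e1, eb, e3⟩
  · simp only [Fintype.card_prod, Fintype.card_fin, ZMod.card]
    rw [← hcard]
end

section
/- Let A be the additive submonoid of ℕ generated by the four elements q, q+q_0, q+q̄, and q(n−1)+q̄+1. Then the number of natural numbers not belonging to A (the genus of the numerical semigroup A) equals q̄(q−1)/2. -/
namespace Stmt12Aux

/-- generic combination of the four generators -/
def val (t n a b c d : ℕ) : ℕ :=
  a * (n*t^2) + b * (n*t^2 + n*t) + c * (n*t^2 + t) + d * ((n*t^2)*(n-1) + n*t + 1)

def Dd (t n m : ℕ) : ℕ := (m % (n*t^2)) % t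
def Cc (t n m : ℕ) : ℕ := ((m % (n*t^2)) / t) % n
def Uu (t n m : ℕ) : ℕ := ((m % (n*t^2)) / t) / n
def Bb (t n m : ℕ) : ℕ := (Uu t n m + t - Dd t n m) % t
def W (t n m : ℕ) : ℕ := val t n 0 (Bb t n m) (Cc t n m) (Dd t n m)

lemma val_add (t n a b c d a' b' c' d' : ℕ) :
    val t n a b c d + val t n a' b' c' d' = val t n (a+a') (b+b') (c+c') (d+d') := by
  unfold val; ring

lemma carry_d (t n a b c x y : ℕ) (hn : 1 ≤ n) :
    val t n a b c (t*x + y) = val t n (a + t*(n-1)*x) b (c + x) y := by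
  obtain ⟨n', rfl⟩ : ∃ n', n = n' + 1 := ⟨n - 1, by omega⟩
  unfold val; simp only [Nat.add_sub_cancel]; ring

lemma carry_c (t n a b c x y d : ℕ) (hn : 1 ≤ n) :
    val t n a b (n*x + y) d = val t n (a + (n-1)*x) (b + x) y d := by
  obtain ⟨n', rfl⟩ : ∃ n', n = n' + 1 := ⟨n - 1, by omega⟩
  unfold val; simp only [Nat.add_sub_cancel]; ring

lemma carry_b (t n a b c d x y : ℕ) :
    val t n a (t*x + y) c d = val t n (a + (t+1)*x) y c d := by
  unfold val; ring

lemma norm (t n : ℕ) (ht : 0 < t) (hn : 0 < n) (a b c d : ℕ) :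
    ∃ a' b' c' d', b' < t ∧ c' < n ∧ d' < t ∧ val t n a b c d = val t n a' b' c' d' := by
  have h1 : val t n a b c d = val t n (a + t*(n-1)*(d/t)) b (c + d/t) (d % t) := by
    conv_lhs => rw [show d = t*(d/t) + d % t from (Nat.div_add_mod d t).symm]
    exact carry_d t n a b c _ _ hn
  set c1 := c + d/t with hc1
  have h2 : val t n (a + t*(n-1)*(d/t)) b c1 (d % t)
      = val t n ((a + t*(n-1)*(d/t)) + (n-1)*(c1/n)) (b + c1/n) (c1 % n) (d % t) := by
    conv_lhs => rw [show c1 = n*(c1/n) + c1 % n from (Nat.div_add_mod c1 n).symm]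
    exact carry_c t n _ b 0 (c1/n) (c1 % n) (d % t) hn
  set b1 := b + c1/n with hb1
  have h3 : val t n ((a + t*(n-1)*(d/t)) + (n-1)*(c1/n)) b1 (c1 % n) (d % t)
      = val t n (((a + t*(n-1)*(d/t)) + (n-1)*(c1/n)) + (t+1)*(b1/t)) (b1 % t) (c1 % n) (d % t) := by
    conv_lhs => rw [show b1 = t*(b1/t) + b1 % t from (Nat.div_add_mod b1 t).symm]
    exact carry_b t n _ 0 (c1 % n) (d % t) (b1/t) (b1 % t)
  exact ⟨_, _, _, _, Nat.mod_lt _ ht, Nat.mod_lt _ hn, Nat.mod_lt _ ht,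
    h1.trans (h2.trans h3)⟩

lemma modq_val (t n a b c d : ℕ) (ht : 0 < t) (hn : 0 < n)
    (hb : b < t) (hc : c < n) (hd : d < t) :
    val t n a b c d % (n*t^2) = d + t*(c + n*((b+d) % t)) := by
  set e := (b+d) % t with he
  set f := (b+d) / t with hf
  have hef : t*f + e = b + d := Nat.div_add_mod _ _
  have het : e < t := Nat.mod_lt _ ht
  have key : val t n a b c d = (n*t^2) * (a+b+c+d*(n-1)+f) + (d + t*(c+n*e)) := by
    obtain ⟨n', rfl⟩ : ∃ n', n = n' + 1 := ⟨n - 1, by omega⟩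
    have hefz : (t:ℤ)*f + e = b + d := by exact_mod_cast hef
    unfold val; simp only [Nat.add_sub_cancel]
    zify
    linear_combination (-(((n':ℤ)+1)*t))*hefz
  have hlt : d + t*(c+n*e) < n*t^2 := by
    have h3 : c + n*e + 1 ≤ n*t := by nlinarith
    calc d + t*(c+n*e) < t + t*(c+n*e) := by omega
    _ = t*(c+n*e+1) := by ring
    _ ≤ t*(n*t) := Nat.mul_le_mul_left _ h3
    _ = n*t^2 := by ring
  rw [key, Nat.mul_add_mod, Nat.mod_eq_of_lt hlt]

end Stmt12Aux
namespace Stmt12Aux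

lemma mod_shift (t b d : ℕ) (ht : 0 < t) (hb : b < t) (hd : d < t) :
    ((b+d) % t + t - d) % t = b := by
  by_cases h : b + d < t
  · have he : (b+d) % t = b + d := Nat.mod_eq_of_lt h
    rw [he, show b + d + t - d = b + t by omega, Nat.add_mod_right, Nat.mod_eq_of_lt hb]
  · have he : (b+d) % t = b + d - t := by
      rw [Nat.mod_eq_sub_mod (by omega)]
      exact Nat.mod_eq_of_lt (by omega)
    rw [he, show b + d - t + t - d = b by omega, Nat.mod_eq_of_lt hb]

lemma digits_val (t n a b c d : ℕ) (ht : 0 < t) (hn : 0 < n)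
    (hb : b < t) (hc : c < n) (hd : d < t) :
    Dd t n (val t n a b c d) = d ∧ Cc t n (val t n a b c d) = c ∧
    Uu t n (val t n a b c d) = (b+d) % t ∧ Bb t n (val t n a b c d) = b := by
  have hm := modq_val t n a b c d ht hn hb hc hd
  have hD : Dd t n (val t n a b c d) = d := by
    rw [Dd, hm, Nat.add_mul_mod_self_left, Nat.mod_eq_of_lt hd]
  have hdiv : (val t n a b c d % (n*t^2)) / t = c + n*((b+d)%t) := by
    rw [hm, Nat.add_mul_div_left _ _ ht, Nat.div_eq_of_lt hd, Nat.zero_add]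
  have hC : Cc t n (val t n a b c d) = c := by
    rw [Cc, hdiv, Nat.add_mul_mod_self_left, Nat.mod_eq_of_lt hc]
  have hU : Uu t n (val t n a b c d) = (b+d) % t := by
    rw [Uu, hdiv, Nat.add_mul_div_left _ _ hn, Nat.div_eq_of_lt hc, Nat.zero_add]
  refine ⟨hD, hC, hU, ?_⟩
  rw [Bb, hU, hD, mod_shift t b d ht hb hd]

lemma W_val (t n a b c d : ℕ) (ht : 0 < t) (hn : 0 < n)
    (hb : b < t) (hc : c < n) (hd : d < t) :
    W t n (val t n a b c d) = val t n 0 b c d := by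
  obtain ⟨hD, hC, hU, hB⟩ := digits_val t n a b c d ht hn hb hc hd
  rw [W, hD, hC, hB]

lemma digit_bounds (t n m : ℕ) (ht : 0 < t) (hn : 0 < n) :
    Bb t n m < t ∧ Cc t n m < n ∧ Dd t n m < t ∧ Uu t n m < t := by
  have hq : 0 < n*t^2 := by positivity
  refine ⟨Nat.mod_lt _ ht, Nat.mod_lt _ hn, Nat.mod_lt _ ht, ?_⟩
  rw [Uu, Nat.div_div_eq_div_mul]
  rw [Nat.div_lt_iff_lt_mul (by positivity)]
  calc m % (n*t^2) < n*t^2 := Nat.mod_lt _ hq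
  _ = t*(t*n) := by ring

lemma decomp (t n m : ℕ) :
    m % (n*t^2) = Dd t n m + t*(Cc t n m + n*(Uu t n m)) := by
  rw [Dd, Cc, Uu]
  have h1 := Nat.div_add_mod (m % (n*t^2)) t
  have h2 := Nat.div_add_mod (m % (n*t^2) / t) n
  set r := m % (n*t^2)
  set x := r / t
  have h2' : x % n + n * (x / n) = x := by omega
  rw [h2']
  omega

lemma BDU (t n m : ℕ) (ht : 0 < t) (hn : 0 < n) :
    (Bb t n m + Dd t n m) % t = Uu t n m := by
  obtain ⟨hB, hC, hD, hU⟩ := digit_bounds t n m ht hn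
  by_cases h : Dd t n m ≤ Uu t n m
  · have hBv : Bb t n m = Uu t n m - Dd t n m := by
      rw [Bb, show Uu t n m + t - Dd t n m = (Uu t n m - Dd t n m) + t by omega,
        Nat.add_mod_right]
      exact Nat.mod_eq_of_lt (by omega)
    rw [hBv, show Uu t n m - Dd t n m + Dd t n m = Uu t n m by omega]
    exact Nat.mod_eq_of_lt hU
  · have hBv : Bb t n m = Uu t n m + t - Dd t n m := by
      rw [Bb]; exact Nat.mod_eq_of_lt (by omega)
    rw [hBv, show Uu t n m + t - Dd t n m + Dd t n m = Uu t n m + t by omega,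
      Nat.add_mod_right]
    exact Nat.mod_eq_of_lt hU

lemma W_mod (t n m : ℕ) (ht : 0 < t) (hn : 0 < n) :
    W t n m % (n*t^2) = m % (n*t^2) := by
  obtain ⟨hB, hC, hD, hU⟩ := digit_bounds t n m ht hn
  rw [W, modq_val t n 0 _ _ _ ht hn hB hC hD, BDU t n m ht hn, decomp t n m]

lemma W_congr (t n m m' : ℕ) (h : m % (n*t^2) = m' % (n*t^2)) : W t n m = W t n m' := by
  rw [W, W, Bb, Bb, Cc, Cc, Dd, Dd, Uu, Uu, h]

lemma W_le_M (t n m : ℕ) (ht : 0 < t) (hn : 0 < n) :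
    W t n m ≤ val t n 0 (t-1) (n-1) (t-1) := by
  obtain ⟨hB, hC, hD, hU⟩ := digit_bounds t n m ht hn
  rw [W]; unfold val
  gcongr <;> omega

end Stmt12Aux
namespace Stmt12Aux

def gens (t n : ℕ) : Set ℕ := {n*t^2, n*t^2 + t, n*t^2 + n*t, n*t^2*(n-1) + n*t + 1}

lemma mul_mem_closure (t n x : ℕ) (hx : x ∈ gens t n) (k : ℕ) :
    k * x ∈ AddSubmonoid.closure (gens t n) := by
  simpa [nsmul_eq_mul] using
    AddSubmonoid.nsmul_mem (S := AddSubmonoid.closure (gens t n)) (AddSubmonoid.subset_closure hx) k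

lemma val_mem (t n a b c d : ℕ) :
    val t n a b c d ∈ AddSubmonoid.closure (gens t n) := by
  unfold val
  refine add_mem (add_mem (add_mem ?_ ?_) ?_) ?_
  · exact mul_mem_closure t n _ (by simp [gens]) a
  · exact mul_mem_closure t n _ (by simp [gens]) b
  · exact mul_mem_closure t n _ (by simp [gens]) c
  · exact mul_mem_closure t n _ (by simp [gens]) d

lemma mem_rep (t n m : ℕ) (ht : 2 ≤ t) (hn : 2 ≤ n)
    (hm : m ∈ AddSubmonoid.closure (gens t n)) :
    ∃ a b c d, b < t ∧ c < n ∧ d < t ∧ m = val t n a b c d := by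
  have ht0 : 0 < t := by omega
  have hn0 : 0 < n := by omega
  let B : AddSubmonoid ℕ :=
    { carrier := {m | ∃ a b c d, b < t ∧ c < n ∧ d < t ∧ m = val t n a b c d}
      zero_mem' := ⟨0, 0, 0, 0, ht0, hn0, ht0, by unfold val; ring⟩
      add_mem' := by
        rintro x y ⟨a1, b1, c1, d1, hb1, hc1, hd1, rfl⟩ ⟨a2, b2, c2, d2, hb2, hc2, hd2, rfl⟩
        rw [val_add]
        obtain ⟨a', b', c', d', hb', hc', hd', heq⟩ :=
          norm t n ht0 hn0 (a1+a2) (b1+b2) (c1+c2) (d1+d2)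
        exact ⟨a', b', c', d', hb', hc', hd', heq⟩ }
  have hsub : gens t n ⊆ B.carrier := by
    intro x hx
    rcases hx with rfl | rfl | rfl | rfl
    · exact ⟨1, 0, 0, 0, ht0, hn0, ht0, by unfold val; ring⟩
    · exact ⟨0, 0, 1, 0, ht0, by omega, ht0, by unfold val; ring⟩
    · exact ⟨0, 1, 0, 0, by omega, hn0, ht0, by unfold val; ring⟩
    · exact ⟨0, 0, 0, 1, ht0, hn0, by omega, by unfold val; ring⟩
  exact (AddSubmonoid.closure_le (S := B)).mpr hsub hm

lemma key_disj (t n m : ℕ) (ht : 2 ≤ t) (hn : 2 ≤ n) :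
    W t n m ≤ m ∨ m + n*t^2 ≤ W t n m := by
  have hq : 0 < n*t^2 := by positivity
  have hw := W_mod t n m (by omega) (by omega)
  have h1 := Nat.div_add_mod m (n*t^2)
  have h2 := Nat.div_add_mod (W t n m) (n*t^2)
  set q := n*t^2
  set km := m / q
  set kw := W t n m / q
  rcases le_or_gt kw km with h | h
  · left
    have := Nat.mul_le_mul_left q h
    omega
  · right
    have h3 : q * (km + 1) ≤ q * kw := Nat.mul_le_mul_left q h
    have h4 : q * (km + 1) = q * km + q := by ring
    omega

lemma mem_iff (t n m : ℕ) (ht : 2 ≤ t) (hn : 2 ≤ n) :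
    m ∈ AddSubmonoid.closure (gens t n) ↔ W t n m ≤ m := by
  have ht0 : 0 < t := by omega
  have hn0 : 0 < n := by omega
  constructor
  · intro hm
    obtain ⟨a, b, c, d, hb, hc, hd, rfl⟩ := mem_rep t n _ ht hn hm
    rw [W_val t n a b c d ht0 hn0 hb hc hd]
    unfold val
    gcongr <;> omega
  · intro hW
    have hmod : W t n m % (n*t^2) = m % (n*t^2) := W_mod t n m ht0 hn0
    obtain ⟨k, hk⟩ := (Nat.modEq_iff_dvd' hW).mp hmod
    have hm : m = W t n m + (n*t^2) * k := by omega
    rw [hm]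
    refine add_mem (val_mem t n 0 _ _ _) ?_
    rw [mul_comm]
    exact mul_mem_closure t n _ (by simp [gens]) k

end Stmt12Aux
namespace Stmt12Aux

lemma q_le_M (t n : ℕ) (ht : 2 ≤ t) (hn : 2 ≤ n) :
    n*t^2 ≤ val t n 0 (t-1) (n-1) (t-1) := by
  obtain ⟨t', rfl⟩ : ∃ t', t = t' + 2 := ⟨t - 2, by omega⟩
  obtain ⟨n', rfl⟩ : ∃ n', n = n' + 2 := ⟨n - 2, by omega⟩
  unfold val
  simp only [show t' + 2 - 1 = t' + 1 from rfl, show n' + 2 - 1 = n' + 1 from rfl]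
  have h1 : (n'+2)*(t'+2)^2 + (t'+2) ≤ (n'+1)*((n'+2)*(t'+2)^2 + (t'+2)) :=
    Nat.le_mul_of_pos_left _ (by omega)
  omega

lemma M_val (t n : ℕ) (ht : 2 ≤ t) (hn : 2 ≤ n) :
    val t n 0 (t-1) (n-1) (t-1) + 1 + n*t = n*t*(n*t^2) + n*t^2 := by
  obtain ⟨t', rfl⟩ : ∃ t', t = t' + 2 := ⟨t - 2, by omega⟩
  obtain ⟨n', rfl⟩ : ∃ n', n = n' + 2 := ⟨n - 2, by omega⟩
  unfold val
  simp only [show t' + 2 - 1 = t' + 1 from rfl, show n' + 2 - 1 = n' + 1 from rfl]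
  ring

lemma arith_e1 (q M Wm v X m km kw rm : ℕ) (hm : m + q ≤ M) (hvW : v + Wm = M)
    (hX : X = M - q - m) (h1 : q*km + rm = m) (h2 : q*kw + rm = Wm)
    (e0 : q*(km+1) = q*km + q) : X + q*(km+1) = v + q*kw := by omega

lemma arith_sym (q M Wm v X m : ℕ) (hq : 0 < q) (hm : m + q ≤ M) (hvW : v + Wm = M)
    (hX : X = M - q - m) (hkey : Wm ≤ m ∨ m + q ≤ Wm) :
    (v ≤ X ↔ ¬ (Wm ≤ m)) := by omega

lemma big_mem (t n m : ℕ) (ht : 2 ≤ t) (hn : 2 ≤ n)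
    (hm : val t n 0 (t-1) (n-1) (t-1) - n*t^2 < m) :
    m ∈ AddSubmonoid.closure (gens t n) := by
  rw [mem_iff t n m ht hn]
  have h1 := W_le_M t n m (by omega) (by omega)
  have h2 := key_disj t n m ht hn
  have h3 := q_le_M t n ht hn
  omega

lemma sym_iff (t n m : ℕ) (ht : 2 ≤ t) (hn : 2 ≤ n)
    (hm : m + n*t^2 ≤ val t n 0 (t-1) (n-1) (t-1)) :
    (val t n 0 (t-1) (n-1) (t-1) - n*t^2 - m ∈ AddSubmonoid.closure (gens t n)
      ↔ m ∉ AddSubmonoid.closure (gens t n)) := by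
  have ht0 : 0 < t := by omega
  have hn0 : 0 < n := by omega
  obtain ⟨hB, hC, hD, hU⟩ := digit_bounds t n m ht0 hn0
  have hWM : W t n m ≤ val t n 0 (t-1) (n-1) (t-1) := W_le_M t n m ht0 hn0
  have hvW : val t n 0 (t - 1 - Bb t n m) (n - 1 - Cc t n m) (t - 1 - Dd t n m) + W t n m
      = val t n 0 (t-1) (n-1) (t-1) := by
    rw [W, val_add, show t - 1 - Bb t n m + Bb t n m = t - 1 by omega,
      show n - 1 - Cc t n m + Cc t n m = n - 1 by omega,
      show t - 1 - Dd t n m + Dd t n m = t - 1 by omega]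
  have hWv : W t n (val t n 0 (t - 1 - Bb t n m) (n - 1 - Cc t n m) (t - 1 - Dd t n m))
      = val t n 0 (t - 1 - Bb t n m) (n - 1 - Cc t n m) (t - 1 - Dd t n m) :=
    W_val t n 0 _ _ _ ht0 hn0 (by omega) (by omega) (by omega)
  have hw := W_mod t n m ht0 hn0
  have h1 := Nat.div_add_mod m (n*t^2)
  have h2 := Nat.div_add_mod (W t n m) (n*t^2)
  have e1 : (val t n 0 (t-1) (n-1) (t-1) - n*t^2 - m) + (n*t^2)*(m/(n*t^2)+1)
      = val t n 0 (t - 1 - Bb t n m) (n - 1 - Cc t n m) (t - 1 - Dd t n m)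
        + (n*t^2)*(W t n m/(n*t^2)) := by
    refine arith_e1 (n*t^2) _ (W t n m) _ _ m (m/(n*t^2)) (W t n m/(n*t^2)) (m % (n*t^2))
      hm hvW rfl h1 (by rw [← hw]; exact h2) (by ring)
  have hres : (val t n 0 (t-1) (n-1) (t-1) - n*t^2 - m) % (n*t^2)
      = val t n 0 (t - 1 - Bb t n m) (n - 1 - Cc t n m) (t - 1 - Dd t n m) % (n*t^2) := by
    calc (val t n 0 (t-1) (n-1) (t-1) - n*t^2 - m) % (n*t^2)
        = ((val t n 0 (t-1) (n-1) (t-1) - n*t^2 - m) + (n*t^2)*(m/(n*t^2)+1)) % (n*t^2) :=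
          (Nat.add_mul_mod_self_left _ _ _).symm
    _ = (val t n 0 (t - 1 - Bb t n m) (n - 1 - Cc t n m) (t - 1 - Dd t n m)
          + (n*t^2)*(W t n m/(n*t^2))) % (n*t^2) := by rw [e1]
    _ = _ := Nat.add_mul_mod_self_left _ _ _
  have hWX : W t n (val t n 0 (t-1) (n-1) (t-1) - n*t^2 - m)
      = val t n 0 (t - 1 - Bb t n m) (n - 1 - Cc t n m) (t - 1 - Dd t n m) :=
    (W_congr t n _ _ hres).trans hWv
  rw [mem_iff t n _ ht hn, mem_iff t n m ht hn, hWX]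
  exact arith_sym (n*t^2) _ (W t n m) _ _ m (by positivity) hm hvW rfl (key_disj t n m ht hn)

end Stmt12Aux
namespace Stmt12Aux

theorem main (t n : ℕ) (ht : 2 ≤ t) (hn : 2 ≤ n) :
    {m : ℕ | m ∉ AddSubmonoid.closure (gens t n)}.ncard = n*t*(n*t^2 - 1)/2 := by
  classical
  set A := AddSubmonoid.closure (gens t n) with hA
  set M := val t n 0 (t-1) (n-1) (t-1) with hM
  set F := M - n*t^2 with hF
  have hqM : n*t^2 ≤ M := q_le_M t n ht hn
  set S1 : Finset ℕ := (Finset.range (F+1)).filter (fun m => m ∉ A) with hS1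
  set S2 : Finset ℕ := (Finset.range (F+1)).filter (fun m => m ∈ A) with hS2
  have hset : {m : ℕ | m ∉ A} = ↑S1 := by
    ext m
    simp only [hS1, Finset.coe_filter, Finset.mem_range, Set.mem_setOf_eq]
    constructor
    · intro hm
      refine ⟨?_, hm⟩
      by_contra h'
      exact hm (big_mem t n m ht hn (by omega))
    · exact fun h => h.2
  have hsum : S2.card + S1.card = F + 1 := by
    rw [hS1, hS2]
    simpa using Finset.card_filter_add_card_filter_not
      (s := Finset.range (F+1)) (p := fun m => m ∈ A)
  have hcard : S1.card = S2.card := by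
    refine Finset.card_bij (fun m _ => F - m) ?_ ?_ ?_
    · intro m hm
      rw [hS1, Finset.mem_filter, Finset.mem_range] at hm
      rw [hS2, Finset.mem_filter, Finset.mem_range]
      refine ⟨by omega, ?_⟩
      have := (sym_iff t n m ht hn (by omega)).mpr hm.2
      rw [← hM, ← hF] at this
      exact this
    · intro m1 hm1 m2 hm2 h
      rw [hS1, Finset.mem_filter, Finset.mem_range] at hm1 hm2
      omega
    · intro m' hm'
      rw [hS2, Finset.mem_filter, Finset.mem_range] at hm'
      refine ⟨F - m', ?_, by omega⟩
      rw [hS1, Finset.mem_filter, Finset.mem_range]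
      refine ⟨by omega, ?_⟩
      intro hc
      have := (sym_iff t n m' ht hn (by omega)).mp (by rw [← hM, ← hF] at *; exact hc)
      exact this hm'.2
  rw [hset, Set.ncard_coe_finset]
  have e1 := M_val t n ht hn
  have e2 : n*t*(n*t^2 - 1) + n*t = n*t*(n*t^2) := by
    have h0 : 0 < n*t^2 := by positivity
    obtain ⟨Q2, hQ2⟩ : ∃ z, n*t^2 = z+1 := ⟨n*t^2 - 1, by omega⟩
    rw [hQ2]
    simp only [Nat.add_sub_cancel]
    ring
  omega

end Stmt12Aux

/-- the genus of the numerical semigroup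
`A = ⟨q, q+q₀, q+q̄, q(n−1)+q̄+1⟩`, i.e. the number of natural numbers not in
`A`, equals `q̄(q−1)/2`. -/
theorem stmt_12 (s h q q0 qbar n : ℕ) (hh : 0 < h) (hs : 2 * h < s)
    (hq : q = 2 ^ s) (hq0 : q0 = 2 ^ h) (hqbar : qbar = 2 ^ (s - h))
    (hn : n = 2 ^ (s - 2 * h))
    (A : AddSubmonoid ℕ)
    (hA : A = AddSubmonoid.closure
      ({q, q + q0, q + qbar, q * (n - 1) + qbar + 1} : Set ℕ)) :
    {m : ℕ | m ∉ A}.ncard = qbar * (q - 1) / 2 := by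
  have ht : 2 ≤ q0 := by
    rw [hq0]
    calc 2 = 2^1 := rfl
    _ ≤ 2^h := Nat.pow_le_pow_right (by norm_num) hh
  have hn2 : 2 ≤ n := by
    rw [hn]
    calc 2 = 2^1 := rfl
    _ ≤ 2^(s - 2*h) := Nat.pow_le_pow_right (by norm_num) (by omega)
  have h1 : q = n * q0^2 := by
    rw [hq, hn, hq0, ← pow_mul, ← pow_add]
    congr 1
    omega
  have h2 : qbar = n * q0 := by
    rw [hqbar, hn, hq0, ← pow_add]
    congr 1
    omega
  subst hA
  rw [h1, h2]
  exact Stmt12Aux.main q0 n ht hn2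
end

section
/- Let A be the additive submonoid of ℕ generated by the four elements q, q+q_0, q+q̄, and q(n−1)+q̄+1. Then every natural number m ≥ q̄(q−1) belongs to A, while q̄(q−1) − 1 does not belong to A. In other words, the conductor of the numerical semigroup A equals q̄q − q̄ = q̄(q−1). -/
set_option maxHeartbeats 1000000

private 
lemma core1 (p t qb q : ℕ) (hqb : qb = (p+2)*(t+2)) (hq : q = (p+2)*qb) :
    ∀ m : ℕ, qb * (q - 1) ≤ m →
      ∃ k a b c : ℕ, k * q + a * (q + (p+2)) + b * (q + qb)
        + c * (q * (t + 1) + qb + 1) = m := by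
  intro m hm
  have hqbpos : 0 < qb := by rw [hqb]; positivity
  have hqpos : 0 < q := by rw [hq, hqb]; positivity
  have hsub : qb * (q - 1) + qb = qb * q := by
    zify [show 1 ≤ q from hqpos]
    ring
  have hm2 : qb * q ≤ m + qb := by linarith
  have hclt : m % (p+2) < p + 2 := Nat.mod_lt _ (by omega)
  have hkey : (p+1) * (q*(t+1)+qb+1) + ((t+1)*(q+(p+2)) + ((p*p+3*p+1)*qb + 1)) + qb
      = qb * q := by rw [hq, hqb]; ring
  have hcg : (m % (p+2)) * (q*(t+1)+qb+1) ≤ (p+1) * (q*(t+1)+qb+1) :=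
    Nat.mul_le_mul_right _ (by omega)
  have hle : (m % (p+2)) * (q*(t+1)+qb+1) + ((t+1)*(q+(p+2)) + ((p*p+3*p+1)*qb + 1)) ≤ m := by
    linarith
  obtain ⟨m1, hm1e, hm1b⟩ :
      ∃ m1, m = (m % (p+2)) * (q*(t+1)+qb+1) + m1 ∧
        (t+1)*(q+(p+2)) + ((p*p+3*p+1)*qb + 1) ≤ m1 :=
    ⟨m - (m % (p+2)) * (q*(t+1)+qb+1),
      (Nat.add_sub_cancel' (le_trans (Nat.le_add_right _ _) hle)).symm,
      Nat.le_sub_of_add_le (by linarith)⟩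
  -- (p+2) ∣ m1
  have d3 : (p+2) ∣ m1 := by
    have d1 : (p+2) ∣ m - m % (p+2) := Nat.dvd_sub_mod m
    have e0 : (m % (p+2)) * (q*(t+1)+qb+1)
        = m % (p+2) + (m % (p+2)) * (q*(t+1)+qb) := by ring
    have e1 : (m % (p+2)) * (q*(t+1)+qb) + m1 = m - m % (p+2) :=
      Nat.eq_sub_of_add_eq (by linarith [hm1e, e0])
    have d2 : (p+2) ∣ (m % (p+2)) * (q*(t+1)+qb) :=
      ⟨(m % (p+2)) * ((p+2)*(t+2)*(t+1)+(t+2)), by rw [hq, hqb]; ring⟩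
    have e2 : m1 = (m - m % (p+2)) - (m % (p+2)) * (q*(t+1)+qb) :=
      Nat.eq_sub_of_add_eq (by linarith [e1])
    rw [e2]; exact Nat.dvd_sub d1 d2
  -- stage 2 : a
  have dmod : (p+2) ∣ m1 % qb := (Nat.dvd_mod_iff ⟨t+2, hqb⟩).mpr d3
  obtain ⟨a, ha_eq, ha_lt⟩ : ∃ a, (p+2) * a = m1 % qb ∧ a < t+2 := by
    refine ⟨m1 % qb / (p+2), Nat.mul_div_cancel' dmod, ?_⟩
    refine (Nat.div_lt_iff_lt_mul (by omega)).mpr ?_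
    calc m1 % qb < qb := Nat.mod_lt _ hqbpos
      _ = (t+2)*(p+2) := by rw [hqb]; ring
  have hag : a * (q+(p+2)) ≤ (t+1) * (q+(p+2)) := Nat.mul_le_mul_right _ (by omega)
  obtain ⟨m2, hm2e, hm2b⟩ :
      ∃ m2, m1 = a * (q+(p+2)) + m2 ∧ (p*p+3*p+1)*qb + 1 ≤ m2 :=
    ⟨m1 - a * (q+(p+2)),
      (Nat.add_sub_cancel' (by linarith [Nat.zero_le ((p*p+3*p+1)*qb)])).symm,
      Nat.le_sub_of_add_le (by linarith [Nat.zero_le ((p*p+3*p+1)*qb)])⟩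
  -- qb ∣ m2
  have d5 : qb ∣ m2 := by
    have d4 : qb ∣ m1 - m1 % qb := Nat.dvd_sub_mod m1
    rw [← ha_eq] at d4
    have e1 : a * q + m2 = m1 - (p+2)*a :=
      Nat.eq_sub_of_add_eq (by linarith [hm2e])
    have d6 : qb ∣ a * q := ⟨a*(p+2), by rw [hq]; ring⟩
    have e2 : m2 = (m1 - (p+2)*a) - a * q :=
      Nat.eq_sub_of_add_eq (by linarith [e1])
    rw [e2]; exact Nat.dvd_sub d4 d6
  -- stage 3 : b
  have d7 : qb ∣ m2 % q := (Nat.dvd_mod_iff ⟨p+2, by rw [hq]; ring⟩).mpr d5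
  obtain ⟨b, hb_eq, hb_lt⟩ : ∃ b, qb * b = m2 % q ∧ b < p+2 := by
    refine ⟨m2 % q / qb, Nat.mul_div_cancel' d7, ?_⟩
    refine (Nat.div_lt_iff_lt_mul hqbpos).mpr ?_
    calc m2 % q < q := Nat.mod_lt _ hqpos
      _ = (p+2)*qb := hq
  have emod : m2 % q + q * (m2/q) = m2 := Nat.mod_add_div m2 q
  have hb3 : b * (q + qb) ≤ m2 := by
    by_contra hcon
    push_neg at hcon
    have h1 : q * (m2/q) < q * b := by linarith [emod, hb_eq]
    have h2 : m2/q < b := Nat.lt_of_mul_lt_mul_left h1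
    have h4 : qb * b ≤ qb * (p+1) := Nat.mul_le_mul_left _ (by omega)
    have h5 : q * (m2/q) ≤ q * p := Nat.mul_le_mul_left _ (by omega)
    have hid : qb*(p+1) + q*p + 1 = (p*p+3*p+1)*qb + 1 := by rw [hq]; ring
    linarith [emod, hm2b, h4, h5, hid, hb_eq]
  have hble : b ≤ m2 / q := by
    refine Nat.le_of_mul_le_mul_left ?_ hqpos
    linarith [emod, hb_eq, hb3]
  refine ⟨m2/q - b, a, b, m % (p+2), ?_⟩
  have hk : (m2/q - b) + b = m2/q := Nat.sub_add_cancel hble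
  have hkq : q * ((m2/q - b) + b) = q * (m2/q) := by rw [hk]
  linarith [hm1e, hm2e, emod, hb_eq, hkq]

private 
lemma core2 (p t qb q : ℕ) (hqb : qb = (p+2)*(t+2)) (hq : q = (p+2)*qb)
    (k a b c : ℕ) :
    k * q + a * (q + (p+2)) + b * (q + qb) + c * (q * (t+1) + qb + 1)
      ≠ qb * (q - 1) - 1 := by
  intro heq
  have hqbpos : 0 < qb := by rw [hqb]; positivity
  have hqpos : 0 < q := by rw [hq, hqb]; positivity
  have hq2 : 2 ≤ q := by rw [hq, hqb]; nlinarith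
  have hF1 : 1 ≤ qb * (q-1) := by
    calc 1 = 1*1 := by ring
      _ ≤ qb * (q-1) := Nat.mul_le_mul hqbpos (by omega)
  have hFq : qb * (q-1) - 1 + (qb + 1) = qb * q := by
    zify [show 1 ≤ q from hqpos, hF1]
    ring
  have ME : k * q + a * (q + (p+2)) + b * (q + qb) + c * (q * (t+1) + qb + 1) + (qb + 1)
      = qb * q := by rw [heq]; exact hFq
  -- step 1 : (p+2) ∣ c + 1
  have dB : (p+2) ∣ (k*q + a*(q+(p+2)) + b*(q+qb) + c*(q*(t+1)+qb) + qb) :=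
    ⟨k*qb + a*(qb+1) + b*(qb+(t+2)) + c*(qb*(t+1)+(t+2)) + (t+2), by rw [hq, hqb]; ring⟩
  have dRHS : (p+2) ∣ qb * q := ⟨qb*qb, by rw [hq]; ring⟩
  have hBsum : (k*q + a*(q+(p+2)) + b*(q+qb) + c*(q*(t+1)+qb) + qb) + (c+1) = qb*q := by
    linarith [ME]
  have d_c1 : (p+2) ∣ c + 1 := (Nat.dvd_add_right dB).mp (hBsum ▸ dRHS)
  -- step 2 : c < 2p+3
  have hbig : qb*q + 1 ≤ (2*p+3) * (q*(t+1)+qb+1) := by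
    have i3 : (2*p+3)*(q*(t+1)+qb+1) + (p*t+2*t+1) = qb*q + q*(t*p+t+1) := by
      rw [hq, hqb]; ring
    have hq8 : 8 ≤ q := by
      rw [hq, hqb]
      calc (8:ℕ) = 2*(2*2) := by norm_num
        _ ≤ (p+2)*((p+2)*(t+2)) :=
          Nat.mul_le_mul (by omega) (Nat.mul_le_mul (by omega) (by omega))
    have hmono : 8*(t*p+t+1) ≤ q*(t*p+t+1) := Nat.mul_le_mul_right _ hq8
    linarith [i3, hmono, Nat.zero_le (t*p)]
  have hc_le : c * (q*(t+1)+qb+1) ≤ qb*q := by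
    linarith [ME, Nat.zero_le (k*q), Nat.zero_le (a*(q+(p+2))), Nat.zero_le (b*(q+qb))]
  have hclt : c < 2*p+3 := by
    by_contra hcon
    push_neg at hcon
    have : (2*p+3) * (q*(t+1)+qb+1) ≤ c * (q*(t+1)+qb+1) :=
      Nat.mul_le_mul_right _ hcon
    linarith
  -- hence c = p+1
  have hc : c = p + 1 := by
    obtain ⟨j, hj⟩ := d_c1
    rcases j with _ | _ | j2
    · omega
    · omega
    · exfalso
      have he2 : (p+2)*(j2+2) = (p+2)*j2 + 2*p + 4 := by ring
      linarith [hj, he2, Nat.zero_le ((p+2)*j2)]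
  subst hc
  -- step 3
  have I1 : (p+1)*(q*(t+1)+qb+1) + (qb + 1) + (p+t+2)*q = qb*q + (p+2) := by
    rw [hq, hqb]; ring
  have E2 : k*q + a*(q+(p+2)) + b*(q+qb) + (p+2) = (p+t+2)*q := by
    linarith [ME, I1]
  -- step 4
  have hD : (a*(p+2) + b*qb + (p+2)) + (k+a+b)*q = (p+t+2)*q := by
    linarith [E2]
  have hMN : k+a+b ≤ p+t+2 := by
    refine Nat.le_of_mul_le_mul_right ?_ hqpos
    exact Nat.le.intro (show (k+a+b)*q + (a*(p+2) + b*qb + (p+2)) = (p+t+2)*q by linarith [hD])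
  obtain ⟨j, hjsum⟩ : ∃ j, k+a+b+j = p+t+2 := ⟨p+t+2-(k+a+b), by omega⟩
  have hDj : a*(p+2) + b*qb + (p+2) = j*q := by
    have h1 : (k+a+b+j)*q = (p+t+2)*q := by rw [hjsum]
    linarith [hD, h1]
  have hj1 : 1 ≤ j := by
    rcases Nat.eq_zero_or_pos j with h0 | h
    · exfalso
      rw [h0, zero_mul] at hDj
      linarith [hDj, Nat.zero_le (a*(p+2)), Nat.zero_le (b*qb)]
    · exact h
  -- step 5 : cancel p+2
  have hE : a + b*(t+2) + 1 = j*qb := by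
    have i1 : (p+2)*(a + b*(t+2) + 1) = a*(p+2) + b*qb + (p+2) := by rw [hqb]; ring
    have i2 : (p+2)*(j*qb) = j*q := by rw [hq]; ring
    have h2 : (p+2) * (a + b*(t+2) + 1) = (p+2) * (j*qb) := by rw [i1, i2]; exact hDj
    exact Nat.eq_of_mul_eq_mul_left (by omega) h2
  -- step 6 : (t+2) ∣ a+1
  have hsum6 : (a+1) + b*(t+2) = (t+2)*((p+2)*j) := by
    rw [hqb] at hE
    linarith [hE]
  have d_a1 : (t+2) ∣ a + 1 := by
    have d1 : (t+2) ∣ (a+1) + b*(t+2) := ⟨(p+2)*j, hsum6⟩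
    have d2 : (t+2) ∣ b*(t+2) := Dvd.intro_left b rfl
    exact (Nat.dvd_add_iff_left d2).mpr d1
  have ha1 : t+1 ≤ a := by
    have := Nat.le_of_dvd (by omega) d_a1
    omega
  -- step 7 : contradiction
  obtain ⟨a1, rfl⟩ : ∃ a1, a = t+1+a1 := ⟨a-(t+1), by omega⟩
  obtain ⟨j1, rfl⟩ : ∃ j1, j = 1+j1 := ⟨j-1, by omega⟩
  have hp : p = a1+b+j1+k := by omega
  subst hp
  rw [hqb] at hE
  nlinarith [hE, Nat.zero_le a1, Nat.zero_le b, Nat.zero_le j1, Nat.zero_le k, Nat.zero_le t]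

private lemma rep_of_mem {a b c d m : ℕ}
    (hm : m ∈ AddSubmonoid.closure ({a, b, c, d} : Set ℕ)) :
    ∃ k l u v : ℕ, k*a + l*b + u*c + v*d = m := by
  induction hm using AddSubmonoid.closure_induction with
  | mem x hx =>
    simp only [Set.mem_insert_iff, Set.mem_singleton_iff] at hx
    rcases hx with rfl|rfl|rfl|rfl
    · exact ⟨1,0,0,0, by ring⟩
    · exact ⟨0,1,0,0, by ring⟩
    · exact ⟨0,0,1,0, by ring⟩
    · exact ⟨0,0,0,1, by ring⟩
  | zero => exact ⟨0,0,0,0, by ring⟩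
  | add x y hx hy ihx ihy =>
    obtain ⟨k1,l1,u1,v1,e1⟩ := ihx
    obtain ⟨k2,l2,u2,v2,e2⟩ := ihy
    exact ⟨k1+k2, l1+l2, u1+u2, v1+v2, by rw [← e1, ← e2]; ring⟩

private lemma mem_of_rep {a b c d m k l u v : ℕ}
    (h : k*a + l*b + u*c + v*d = m) :
    m ∈ AddSubmonoid.closure ({a, b, c, d} : Set ℕ) := by
  rw [← h]
  refine add_mem (add_mem (add_mem ?_ ?_) ?_) ?_ <;>
    simpa [nsmul_eq_mul] using
      nsmul_mem (AddSubmonoid.subset_closure (by simp : _ ∈ ({a,b,c,d} : Set ℕ))) _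

/-- for `A = ⟨q, q+q₀, q+q̄, q(n−1)+q̄+1⟩`, every natural number
`m ≥ q̄(q−1)` lies in `A`, while `q̄(q−1) − 1 ∉ A`; i.e. the conductor of `A` is
`q̄(q−1)`. -/
theorem stmt_13 (s h q q0 qbar n : ℕ) (hh : 0 < h) (hs : 2 * h < s)
    (hq : q = 2 ^ s) (hq0 : q0 = 2 ^ h) (hqbar : qbar = 2 ^ (s - h))
    (hn : n = 2 ^ (s - 2 * h))
    (A : AddSubmonoid ℕ)
    (hA : A = AddSubmonoid.closure
      ({q, q + q0, q + qbar, q * (n - 1) + qbar + 1} : Set ℕ)) :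
    (∀ m : ℕ, qbar * (q - 1) ≤ m → m ∈ A) ∧ qbar * (q - 1) - 1 ∉ A := by
  have hq0_2 : 2 ≤ q0 := by
    rw [hq0]
    calc 2 = 2^1 := rfl
      _ ≤ 2^h := Nat.pow_le_pow_right (by norm_num) hh
  have hn2 : 2 ≤ n := by
    rw [hn]
    calc 2 = 2^1 := rfl
      _ ≤ 2^(s-2*h) := Nat.pow_le_pow_right (by norm_num) (by omega)
  obtain ⟨p, hp⟩ : ∃ p, q0 = p + 2 := ⟨q0-2, by omega⟩
  obtain ⟨t, ht⟩ : ∃ t, n = t + 2 := ⟨n-2, by omega⟩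
  have hqb_eq : qbar = q0 * n := by
    rw [hqbar, hq0, hn, ← pow_add]
    congr 1
    omega
  have hq_eq : q = q0 * qbar := by
    rw [hq, hq0, hqbar, ← pow_add]
    congr 1
    omega
  have hqb' : qbar = (p+2)*(t+2) := by rw [hqb_eq, hp, ht]
  have hq' : q = (p+2)*qbar := by rw [hq_eq, hp]
  have hn1 : n - 1 = t + 1 := by omega
  subst hA
  constructor
  · intro m hm
    obtain ⟨k, a, b, c, hrep⟩ := core1 p t qbar q hqb' hq' m hm
    rw [← hp, ← hn1] at hrep
    exact mem_of_rep hrep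
  · intro hmem
    obtain ⟨k, a, b, c, hrep⟩ := rep_of_mem hmem
    rw [hp, hn1] at hrep
    exact core2 p t qbar q hqb' hq' k a b c hrep
end

section
/- Let A be the additive submonoid of ℕ generated by the four elements q, q+q_0, q+q̄, and q(n−1)+q̄+1. Then A is a symmetric numerical semigroup: for every natural number m with m < q̄(q−1), one has m ∈ A if and only if q̄(q−1) − 1 − m ∉ A. -/
/-- Combination of the four generators with given coefficients (over ℤ). -/
def swCombo (q0 n a1 a2 a3 a4 : ℤ) : ℤ :=
  a1 * (n * q0 * q0) + a2 * (n * q0 * q0 + n * q0) + a3 * (n * q0 * q0 + q0)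
    + a4 * (n * q0 * q0 * (n - 1) + n * q0 + 1)

/-- Bounded representation with nonnegative leading coefficient. -/
def swRep (q0 n m : ℤ) : Prop :=
  ∃ a1 a2 a3 a4 : ℤ, 0 ≤ a1 ∧ 0 ≤ a2 ∧ a2 < q0 ∧ 0 ≤ a3 ∧ a3 < n ∧
    0 ≤ a4 ∧ a4 < q0 ∧ m = swCombo q0 n a1 a2 a3 a4

lemma sw_uniq (q0 n : ℤ) (hq0 : 2 ≤ q0) (hn : 2 ≤ n)
    (a1 a2 a3 a4 b1 b2 b3 b4 : ℤ)
    (ha2 : 0 ≤ a2) (ha2' : a2 < q0) (ha3 : 0 ≤ a3) (ha3' : a3 < n)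
    (ha4 : 0 ≤ a4) (ha4' : a4 < q0)
    (hb2 : 0 ≤ b2) (hb2' : b2 < q0) (hb3 : 0 ≤ b3) (hb3' : b3 < n)
    (hb4 : 0 ≤ b4) (hb4' : b4 < q0)
    (heq : swCombo q0 n a1 a2 a3 a4 = swCombo q0 n b1 b2 b3 b4) :
    a1 = b1 ∧ a2 = b2 ∧ a3 = b3 ∧ a4 = b4 := by
  have hq0z : (q0 : ℤ) ≠ 0 := by omega
  have hnz : (n : ℤ) ≠ 0 := by omega
  simp only [swCombo] at heq
  have h4 : a4 = b4 := by
    have hd : q0 ∣ (a4 - b4) :=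
      ⟨-((a1 - b1) * (n * q0) + (a2 - b2) * (n * q0 + n) + (a3 - b3) * (n * q0 + 1)
          + (a4 - b4) * (n * q0 * (n - 1) + n)), by linear_combination heq⟩
    have := Int.eq_zero_of_abs_lt_dvd hd (by rw [abs_lt]; omega)
    omega
  have hE : (a1 - b1) * (n * q0) + (a2 - b2) * (n * (q0 + 1)) + (a3 - b3) * (n * q0 + 1) = 0 := by
    apply mul_left_cancel₀ hq0z
    linear_combination heq - (n * q0 * q0 * (n - 1) + n * q0 + 1) * h4
  have h3 : a3 = b3 := by
    have hd : n ∣ (a3 - b3) :=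
      ⟨-((a1 - b1) * q0 + (a2 - b2) * (q0 + 1) + (a3 - b3) * q0), by linear_combination hE⟩
    have := Int.eq_zero_of_abs_lt_dvd hd (by rw [abs_lt]; omega)
    omega
  have hE2 : (a1 - b1) * q0 + (a2 - b2) * (q0 + 1) = 0 := by
    apply mul_left_cancel₀ hnz
    linear_combination hE - (n * q0 + 1) * h3
  have h2 : a2 = b2 := by
    have hd : q0 ∣ (a2 - b2) := ⟨-((a1 - b1) + (a2 - b2)), by linear_combination hE2⟩
    have := Int.eq_zero_of_abs_lt_dvd hd (by rw [abs_lt]; omega)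
    omega
  have h1 : a1 = b1 := by
    apply mul_right_cancel₀ hq0z
    linear_combination hE2 - (q0 + 1) * h2
  exact ⟨h1, h2, h3, h4⟩

lemma sw_decomp (q0 n : ℤ) (hq0 : 2 ≤ q0) (hn : 2 ≤ n) (m : ℤ) :
    ∃ a1 a2 a3 a4 : ℤ, 0 ≤ a2 ∧ a2 < q0 ∧ 0 ≤ a3 ∧ a3 < n ∧
      0 ≤ a4 ∧ a4 < q0 ∧ m = swCombo q0 n a1 a2 a3 a4 := by
  have hq0p : (0 : ℤ) < q0 := by omega
  have hnp : (0 : ℤ) < n := by omega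
  set a4 := m % q0 with ha4def
  have ha4 : 0 ≤ a4 := Int.emod_nonneg m (by omega)
  have ha4' : a4 < q0 := Int.emod_lt_of_pos m hq0p
  have hd : m = q0 * (m / q0) + a4 := (Int.mul_ediv_add_emod m q0).symm
  set M := m / q0 - a4 * (n * q0 * (n - 1) + n) with hMdef
  have hM : m = a4 * (n * q0 * q0 * (n - 1) + n * q0 + 1) + q0 * M := by
    rw [hMdef]; linear_combination hd
  set a3 := M % n with ha3def
  have ha3 : 0 ≤ a3 := Int.emod_nonneg M (by omega)
  have ha3' : a3 < n := Int.emod_lt_of_pos M hnp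
  have hd3 : M = n * (M / n) + a3 := (Int.mul_ediv_add_emod M n).symm
  set M2 := M / n - a3 * q0 with hM2def
  have hM3 : M = a3 * (n * q0 + 1) + n * M2 := by rw [hM2def]; linear_combination hd3
  set a2 := M2 % q0 with ha2def
  have ha2 : 0 ≤ a2 := Int.emod_nonneg M2 (by omega)
  have ha2' : a2 < q0 := Int.emod_lt_of_pos M2 hq0p
  have hd2 : M2 = q0 * (M2 / q0) + a2 := (Int.mul_ediv_add_emod M2 q0).symm
  set a1 := M2 / q0 - a2 with ha1def
  have hM4 : M2 = a2 * (q0 + 1) + q0 * a1 := by rw [ha1def]; linear_combination hd2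
  refine ⟨a1, a2, a3, a4, ha2, ha2', ha3, ha3', ha4, ha4', ?_⟩
  simp only [swCombo]
  linear_combination hM + q0 * hM3 + (n * q0) * hM4

/-- Any nonnegative combination can be rewritten in bounded form. -/
lemma sw_normalize (q0 n : ℤ) (hq0 : 2 ≤ q0) (hn : 2 ≤ n) (a1 a2 a3 a4 : ℤ)
    (h1 : 0 ≤ a1) (h2 : 0 ≤ a2) (h3 : 0 ≤ a3) (h4 : 0 ≤ a4) :
    ∃ b1 b2 b3 b4 : ℤ, 0 ≤ b1 ∧ 0 ≤ b2 ∧ b2 < q0 ∧ 0 ≤ b3 ∧ b3 < n ∧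
      0 ≤ b4 ∧ b4 < q0 ∧ swCombo q0 n a1 a2 a3 a4 = swCombo q0 n b1 b2 b3 b4 := by
  have hq0p : (0 : ℤ) < q0 := by omega
  have hnp : (0 : ℤ) < n := by omega
  set t4 := a4 / q0 with ht4
  set r4 := a4 % q0 with hr4
  have e4 : a4 = q0 * t4 + r4 := (Int.mul_ediv_add_emod a4 q0).symm
  have ht4n : 0 ≤ t4 := Int.ediv_nonneg h4 (le_of_lt hq0p)
  have hr4n : 0 ≤ r4 := Int.emod_nonneg a4 (by omega)
  have hr4' : r4 < q0 := Int.emod_lt_of_pos a4 hq0p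
  set t3 := (a3 + t4) / n with ht3
  set r3 := (a3 + t4) % n with hr3
  have e3 : a3 + t4 = n * t3 + r3 := (Int.mul_ediv_add_emod (a3 + t4) n).symm
  have ht3n : 0 ≤ t3 := Int.ediv_nonneg (by omega) (le_of_lt hnp)
  have hr3n : 0 ≤ r3 := Int.emod_nonneg (a3 + t4) (by omega)
  have hr3' : r3 < n := Int.emod_lt_of_pos (a3 + t4) hnp
  set t2 := (a2 + t3) / q0 with ht2
  set r2 := (a2 + t3) % q0 with hr2
  have e2 : a2 + t3 = q0 * t2 + r2 := (Int.mul_ediv_add_emod (a2 + t3) q0).symm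
  have ht2n : 0 ≤ t2 := Int.ediv_nonneg (by omega) (le_of_lt hq0p)
  have hr2n : 0 ≤ r2 := Int.emod_nonneg (a2 + t3) (by omega)
  have hr2' : r2 < q0 := Int.emod_lt_of_pos (a2 + t3) hq0p
  refine ⟨a1 + t4 * q0 * (n - 1) + t3 * (n - 1) + t2 * (q0 + 1), r2, r3, r4, ?_,
    hr2n, hr2', hr3n, hr3', hr4n, hr4', ?_⟩
  · have k1 : 0 ≤ t4 * q0 * (n - 1) :=
      mul_nonneg (mul_nonneg ht4n (by omega)) (by omega)
    have k2 : 0 ≤ t3 * (n - 1) := mul_nonneg ht3n (by omega)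
    have k3 : 0 ≤ t2 * (q0 + 1) := mul_nonneg ht2n (by omega)
    omega
  · simp only [swCombo]
    linear_combination (n * q0 * q0 * (n - 1) + n * q0 + 1) * e4
      + (n * q0 * q0 + q0) * e3 + (n * q0 * q0 + n * q0) * e2

lemma sw_exclusive (q0 n : ℤ) (hq0 : 2 ≤ q0) (hn : 2 ≤ n) (m : ℤ) :
    swRep q0 n m ↔ ¬ swRep q0 n (n * q0 * (n * q0 * q0 - 1) - 1 - m) := by
  obtain ⟨a1, a2, a3, a4, ha2, ha2', ha3, ha3', ha4, ha4', hm⟩ :=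
    sw_decomp q0 n hq0 hn m
  have hcomp : n * q0 * (n * q0 * q0 - 1) - 1 - m
      = swCombo q0 n (-1 - a1) (q0 - 1 - a2) (n - 1 - a3) (q0 - 1 - a4) := by
    simp only [swCombo] at hm ⊢
    linear_combination -hm
  constructor
  · rintro ⟨c1, c2, c3, c4, hc1, hc2, hc2', hc3, hc3', hc4, hc4', hc⟩
      ⟨d1, d2, d3, d4, hd1, hd2, hd2', hd3, hd3', hd4, hd4', hd⟩
    have hu1 := sw_uniq q0 n hq0 hn c1 c2 c3 c4 a1 a2 a3 a4
      hc2 hc2' hc3 hc3' hc4 hc4' ha2 ha2' ha3 ha3' ha4 ha4' (by rw [← hc, ← hm])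
    have hu2 := sw_uniq q0 n hq0 hn d1 d2 d3 d4 (-1 - a1) (q0 - 1 - a2) (n - 1 - a3)
      (q0 - 1 - a4) hd2 hd2' hd3 hd3' hd4 hd4' (by omega) (by omega) (by omega)
      (by omega) (by omega) (by omega) (by rw [← hd, ← hcomp])
    omega
  · intro hnot
    refine ⟨a1, a2, a3, a4, ?_, ha2, ha2', ha3, ha3', ha4, ha4', hm⟩
    by_contra hneg
    exact hnot ⟨-1 - a1, q0 - 1 - a2, n - 1 - a3, q0 - 1 - a4, by omega, by omega,
      by omega, by omega, by omega, by omega, by omega, hcomp⟩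

lemma sw_mem_iff (q q0 qbar n : ℕ) (hq0 : 2 ≤ q0) (hn : 2 ≤ n)
    (hqb : qbar = n * q0) (hq : q = n * q0 * q0) (m : ℕ) :
    m ∈ AddSubmonoid.closure ({q, q + q0, q + qbar, q * (n - 1) + qbar + 1} : Set ℕ)
      ↔ swRep (q0 : ℤ) (n : ℤ) (m : ℤ) := by
  have hq0' : (2 : ℤ) ≤ (q0 : ℤ) := by exact_mod_cast hq0
  have hn' : (2 : ℤ) ≤ (n : ℤ) := by exact_mod_cast hn
  have hn1 : 1 ≤ n := by omega
  have hcast1 : (q : ℤ) = (n : ℤ) * q0 * q0 := by rw [hq]; push_cast; ring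
  have hcast2 : ((q + qbar : ℕ) : ℤ) = (n : ℤ) * q0 * q0 + n * q0 := by
    rw [hq, hqb]; push_cast; ring
  have hcast3 : ((q + q0 : ℕ) : ℤ) = (n : ℤ) * q0 * q0 + q0 := by
    rw [hq]; push_cast; ring
  have hcast4 : ((q * (n - 1) + qbar + 1 : ℕ) : ℤ)
      = (n : ℤ) * q0 * q0 * ((n : ℤ) - 1) + n * q0 + 1 := by
    rw [hq, hqb]; push_cast [Nat.cast_sub hn1]; ring
  constructor
  · intro hm
    induction hm using AddSubmonoid.closure_induction with
    | mem x hx =>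
      rcases hx with hx | hx | hx | hx
      · exact ⟨1, 0, 0, 0, by omega, by omega, by omega, by omega, by omega,
          by omega, by omega, by simp only [swCombo, hx, hcast1]; ring⟩
      · exact ⟨0, 0, 1, 0, by omega, by omega, by omega, by omega, by omega,
          by omega, by omega, by simp only [swCombo, hx, hcast3]; ring⟩
      · exact ⟨0, 1, 0, 0, by omega, by omega, by omega, by omega, by omega,
          by omega, by omega, by simp only [swCombo, hx, hcast2]; ring⟩
      · simp only [Set.mem_singleton_iff] at hx
        exact ⟨0, 0, 0, 1, by omega, by omega, by omega, by omega, by omega,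
          by omega, by omega, by simp only [swCombo, hx, hcast4]; ring⟩
    | zero => exact ⟨0, 0, 0, 0, by omega, by omega, by omega, by omega, by omega,
        by omega, by omega, by simp [swCombo]⟩
    | add x y hx hy ihx ihy =>
      obtain ⟨a1, a2, a3, a4, ha1, ha2, ha2', ha3, ha3', ha4, ha4', hxe⟩ := ihx
      obtain ⟨b1, b2, b3, b4, hb1, hb2, hb2', hb3, hb3', hb4, hb4', hye⟩ := ihy
      obtain ⟨c1, c2, c3, c4, hc1, hc2, hc2', hc3, hc3', hc4, hc4', hce⟩ :=
        sw_normalize (q0 : ℤ) (n : ℤ) hq0' hn' (a1 + b1) (a2 + b2) (a3 + b3) (a4 + b4)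
          (by omega) (by omega) (by omega) (by omega)
      refine ⟨c1, c2, c3, c4, hc1, hc2, hc2', hc3, hc3', hc4, hc4', ?_⟩
      rw [← hce]
      push_cast
      simp only [swCombo] at hxe hye ⊢
      linear_combination hxe + hye
  · rintro ⟨a1, a2, a3, a4, ha1, ha2, ha2', ha3, ha3', ha4, ha4', hm⟩
    have key : m = a1.toNat * q + a2.toNat * (q + qbar) + a3.toNat * (q + q0)
        + a4.toNat * (q * (n - 1) + qbar + 1) := by
      have e1 : ((a1.toNat : ℤ)) = a1 := Int.toNat_of_nonneg ha1
      have e2 : ((a2.toNat : ℤ)) = a2 := Int.toNat_of_nonneg ha2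
      have e3 : ((a3.toNat : ℤ)) = a3 := Int.toNat_of_nonneg ha3
      have e4 : ((a4.toNat : ℤ)) = a4 := Int.toNat_of_nonneg ha4
      have : (m : ℤ) = (a1.toNat : ℤ) * q + (a2.toNat : ℤ) * ((q : ℤ) + qbar)
          + (a3.toNat : ℤ) * ((q : ℤ) + q0)
          + (a4.toNat : ℤ) * ((q : ℤ) * ((n : ℤ) - 1) + qbar + 1) := by
        rw [e1, e2, e3, e4, hcast1, hqb]
        push_cast
        simp only [swCombo] at hm
        linear_combination hm
      have goalZ : (m : ℤ) = ((a1.toNat * q + a2.toNat * (q + qbar) + a3.toNat * (q + q0)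
          + a4.toNat * (q * (n - 1) + qbar + 1) : ℕ) : ℤ) := by
        push_cast [Nat.cast_sub hn1]
        linear_combination this
      exact_mod_cast goalZ
    rw [key]
    have m1 : q ∈ ({q, q + q0, q + qbar, q * (n - 1) + qbar + 1} : Set ℕ) := by simp
    have m2 : q + q0 ∈ ({q, q + q0, q + qbar, q * (n - 1) + qbar + 1} : Set ℕ) := by simp
    have m3 : q + qbar ∈ ({q, q + q0, q + qbar, q * (n - 1) + qbar + 1} : Set ℕ) := by simp
    have m4 : q * (n - 1) + qbar + 1
        ∈ ({q, q + q0, q + qbar, q * (n - 1) + qbar + 1} : Set ℕ) := by simp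
    have sm : ∀ (k x : ℕ), x ∈ ({q, q + q0, q + qbar, q * (n - 1) + qbar + 1} : Set ℕ) →
        k * x ∈ AddSubmonoid.closure
          ({q, q + q0, q + qbar, q * (n - 1) + qbar + 1} : Set ℕ) := by
      intro k x hx
      have := nsmul_mem (AddSubmonoid.subset_closure hx) k
      simpa [nsmul_eq_mul] using this
    exact add_mem (add_mem (add_mem (sm _ _ m1) (sm _ _ m3)) (sm _ _ m2)) (sm _ _ m4)


/-- the numerical semigroup `A = ⟨q, q+q₀, q+q̄, q(n−1)+q̄+1⟩` is
symmetric: for every `m < q̄(q−1)`, `m ∈ A ↔ q̄(q−1) − 1 − m ∉ A`. -/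
theorem stmt_14 (s h q q0 qbar n : ℕ) (hh : 0 < h) (hs : 2 * h < s)
    (hq : q = 2 ^ s) (hq0 : q0 = 2 ^ h) (hqbar : qbar = 2 ^ (s - h))
    (hn : n = 2 ^ (s - 2 * h))
    (A : AddSubmonoid ℕ)
    (hA : A = AddSubmonoid.closure
      ({q, q + q0, q + qbar, q * (n - 1) + qbar + 1} : Set ℕ)) :
    ∀ m : ℕ, m < qbar * (q - 1) → (m ∈ A ↔ qbar * (q - 1) - 1 - m ∉ A) := by
  have hq0ge : 2 ≤ q0 := by
    rw [hq0]; calc 2 = 2 ^ 1 := by norm_num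
    _ ≤ 2 ^ h := Nat.pow_le_pow_right (by norm_num) hh
  have hnge : 2 ≤ n := by
    rw [hn]; calc 2 = 2 ^ 1 := by norm_num
    _ ≤ 2 ^ (s - 2 * h) := Nat.pow_le_pow_right (by norm_num) (by omega)
  have hqb : qbar = n * q0 := by
    rw [hqbar, hn, hq0, ← pow_add]; congr 1; omega
  have hqe : q = n * q0 * q0 := by
    rw [hq, hn, hq0, ← pow_add, ← pow_add]; congr 1; omega
  intro m hm
  have hq1 : 1 ≤ q := by rw [hq]; exact Nat.one_le_two_pow
  have hmle : m + 1 ≤ qbar * (q - 1) := hm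
  rw [hA, sw_mem_iff q q0 qbar n hq0ge hnge hqb hqe,
    sw_mem_iff q q0 qbar n hq0ge hnge hqb hqe]
  have hqbZ : ((qbar : ℕ) : ℤ) = (n : ℤ) * q0 := by rw [hqb]; push_cast; ring
  have hqZ : ((q : ℕ) : ℤ) = (n : ℤ) * q0 * q0 := by rw [hqe]; push_cast; ring
  have hcast : ((qbar * (q - 1) - 1 - m : ℕ) : ℤ)
      = (n : ℤ) * q0 * ((n : ℤ) * q0 * q0 - 1) - 1 - m := by
    have e : qbar * (q - 1) - 1 - m + (m + 1) = qbar * (q - 1) := by omega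
    have e' := congrArg (Nat.cast : ℕ → ℤ) e
    push_cast [Nat.cast_sub hq1] at e'
    rw [hqbZ, hqZ] at e'
    linarith
  rw [hcast]
  exact sw_exclusive (q0 : ℤ) (n : ℤ) (by exact_mod_cast hq0ge) (by exact_mod_cast hnge) m
end

section
/- Let A be the additive submonoid of ℕ generated by the four elements q, q+q_0, q+q̄, and q(n−1)+q̄+1. Then the Apéry set of A with respect to q, namely Ap(A,q) := { x ∈ A : there is no y ∈ A with x = y + q }, is exactly the set Ā := { t_1(q+q_0) + t_2(q+q̄) + t_3(q(n−1)+q̄+1) : 0 ≤ t_1 ≤ n−1, 0 ≤ t_2 ≤ q_0−1, 0 ≤ t_3 ≤ q_0−1 }. -/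
/-- split digits: if `a + B*x = a' + B*x'` with `a, a' < B` then components agree. -/
lemma my_split (B a a' x x' : ℕ) (ha : a < B) (ha' : a' < B)
    (hE : a + B * x = a' + B * x') : a = a' ∧ x = x' := by
  have h1 : a % B = a' % B := by
    have := congrArg (· % B) hE
    simpa [Nat.add_mul_mod_self_left] using this
  rw [Nat.mod_eq_of_lt ha, Nat.mod_eq_of_lt ha'] at h1
  subst h1
  exact ⟨rfl, Nat.eq_of_mul_eq_mul_left (by omega) (Nat.add_left_cancel hE)⟩

/-- reduction algebra identity -/
lemma my_red_alg (q0 N a0 a1 a2 a3 b3 c m t1 t2 t3 : ℕ)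
    (h1 : a3 = q0 * b3 + t3) (h2 : a1 + b3 = (N+1) * c + t1) (h3 : c + a2 = q0 * m + t2) :
    a0 * (q0*(q0*(N+1))) + a1 * (q0*(q0*(N+1)) + q0) + a2 * (q0*(q0*(N+1)) + q0*(N+1))
      + a3 * (q0*(q0*(N+1)) * N + q0*(N+1) + 1)
    = t1 * (q0*(q0*(N+1)) + q0) + t2 * (q0*(q0*(N+1)) + q0*(N+1))
      + t3 * (q0*(q0*(N+1)) * N + q0*(N+1) + 1)
      + (a0 + m*(q0+1) + (c + b3*q0)*N) * (q0*(q0*(N+1))) := by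
  zify at h1 h2 h3 ⊢
  linear_combination ((q0:ℤ)*(q0*(N+1)) * N + q0*(N+1) + 1) * h1
    + ((q0:ℤ)*(q0*(N+1)) + q0) * h2 + ((q0:ℤ)*(q0*(N+1)) + q0*(N+1)) * h3

/-- mod formula algebra identity -/
lemma my_mod_alg (q0 N d v t1 t2 t3 : ℕ) (hvd : q0 * d + v = t2 + t3) :
    t1 * (q0*(q0*(N+1)) + q0) + t2 * (q0*(q0*(N+1)) + q0*(N+1))
      + t3 * (q0*(q0*(N+1)) * N + q0*(N+1) + 1)
    = (t3 + q0*(t1 + (N+1)*v)) + (q0*(q0*(N+1))) * (t1 + t2 + t3*N + d) := by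
  zify at hvd ⊢
  linear_combination (-(q0:ℤ)*(N+1)) * hvd

/-- reduction to normal form -/
lemma my_red (q q0 qbar n : ℕ) (hqf : q = q0 * qbar) (hqb : qbar = q0 * n)
    (hq0 : 0 < q0) (hn : 0 < n) (a0 a1 a2 a3 : ℕ) :
    ∃ t1 t2 t3 k : ℕ, t1 < n ∧ t2 < q0 ∧ t3 < q0 ∧
      a0 * q + a1 * (q + q0) + a2 * (q + qbar) + a3 * (q * (n-1) + qbar + 1)
        = t1 * (q + q0) + t2 * (q + qbar) + t3 * (q * (n-1) + qbar + 1) + k * q := by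
  obtain ⟨N, rfl⟩ : ∃ N, n = N + 1 := ⟨n - 1, by omega⟩
  subst hqb; subst hqf
  set b3 := a3 / q0 with hb3
  set t3 := a3 % q0 with ht3
  set c := (a1 + b3) / (N+1) with hc
  set t1 := (a1 + b3) % (N+1) with ht1
  set m := (c + a2) / q0 with hm
  set t2 := (c + a2) % q0 with ht2
  refine ⟨t1, t2, t3, a0 + m*(q0+1) + (c + b3*q0)*N,
    Nat.mod_lt _ (by omega), Nat.mod_lt _ hq0, Nat.mod_lt _ hq0, ?_⟩
  have h1 : a3 = q0 * b3 + t3 := by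
    rw [hb3, ht3]; exact (Nat.div_add_mod a3 q0).symm
  have h2 : a1 + b3 = (N+1) * c + t1 := by
    rw [hc, ht1]; exact (Nat.div_add_mod (a1 + b3) (N+1)).symm
  have h3 : c + a2 = q0 * m + t2 := by
    rw [hm, ht2]; exact (Nat.div_add_mod (c + a2) q0).symm
  have := my_red_alg q0 N a0 a1 a2 a3 b3 c m t1 t2 t3 h1 h2 h3
  simpa using this

/-- mod-q value of a normal form -/
lemma my_mod (q q0 qbar n : ℕ) (hqf : q = q0 * qbar) (hqb : qbar = q0 * n)
    (hq0 : 0 < q0) (t1 t2 t3 : ℕ) (h1 : t1 < n) (h2 : t2 < q0) (h3 : t3 < q0) :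
    (t1 * (q + q0) + t2 * (q + qbar) + t3 * (q * (n-1) + qbar + 1)) % q
      = t3 + q0 * (t1 + n * ((t2+t3) % q0)) := by
  obtain ⟨N, rfl⟩ : ∃ N, n = N + 1 := ⟨n - 1, by omega⟩
  subst hqb; subst hqf
  set v := (t2 + t3) % q0 with hv
  set d := (t2 + t3) / q0 with hd
  have hvd : q0 * d + v = t2 + t3 := by rw [hd, hv]; exact Nat.div_add_mod (t2+t3) q0
  have key := my_mod_alg q0 N d v t1 t2 t3 hvd
  have hlt : t3 + q0 * (t1 + (N+1)*v) < q0*(q0*(N+1)) := by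
    have hvlt : v < q0 := Nat.mod_lt _ hq0
    have e1 : (N+1)*(v+1) = (N+1)*v + (N+1) := by ring
    have hm0 : t1 + (N+1)*v + 1 ≤ (N+1)*(v+1) := by omega
    have hm1 : (N+1)*(v+1) ≤ (N+1)*q0 := Nat.mul_le_mul le_rfl (by omega)
    have hm2 : t1 + (N+1)*v + 1 ≤ (N+1)*q0 := le_trans hm0 hm1
    have hm3 : q0 * (t1 + (N+1)*v + 1) ≤ q0 * ((N+1)*q0) := Nat.mul_le_mul le_rfl hm2
    have e2 : q0 * (t1 + (N+1)*v + 1) = q0 * (t1 + (N+1)*v) + q0 := by ring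
    have e3 : q0 * ((N+1)*q0) = q0*(q0*(N+1)) := by ring
    omega
  rw [show ((N:ℕ)+1-1) = N from rfl] at *
  rw [key, Nat.add_mul_mod_self_left, Nat.mod_eq_of_lt hlt]



/-- the Apéry set of `A = ⟨q, q+q₀, q+q̄, q(n−1)+q̄+1⟩` with
respect to `q` is exactly `Ā = { t₁(q+q₀) + t₂(q+q̄) + t₃(q(n−1)+q̄+1) :
0 ≤ t₁ ≤ n−1, 0 ≤ t₂,t₃ ≤ q₀−1 }`. -/
theorem stmt_15 (s h q q0 qbar n : ℕ) (hh : 0 < h) (hs : 2 * h < s)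
    (hq : q = 2 ^ s) (hq0 : q0 = 2 ^ h) (hqbar : qbar = 2 ^ (s - h))
    (hn : n = 2 ^ (s - 2 * h))
    (A : AddSubmonoid ℕ)
    (hA : A = AddSubmonoid.closure
      ({q, q + q0, q + qbar, q * (n - 1) + qbar + 1} : Set ℕ)) :
    {x : ℕ | x ∈ A ∧ ¬∃ y ∈ A, x = y + q}
      = {x : ℕ | ∃ t1 t2 t3 : ℕ, t1 ≤ n - 1 ∧ t2 ≤ q0 - 1 ∧ t3 ≤ q0 - 1 ∧
          x = t1 * (q + q0) + t2 * (q + qbar) + t3 * (q * (n - 1) + qbar + 1)} := by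
  have hq0pos : 0 < q0 := by rw [hq0]; positivity
  have hq02 : 2 ≤ q0 := by
    rw [hq0]; calc (2:ℕ) = 2^1 := rfl
    _ ≤ 2^h := Nat.pow_le_pow_right (by norm_num) hh
  have hn2 : 2 ≤ n := by
    rw [hn]; calc (2:ℕ) = 2^1 := rfl
    _ ≤ 2^(s-2*h) := Nat.pow_le_pow_right (by norm_num) (by omega)
  have hnpos : 0 < n := by omega
  have hqf : q = q0 * qbar := by
    rw [hq, hq0, hqbar, ← pow_add]; congr 1; omega
  have hqb : qbar = q0 * n := by
    rw [hqbar, hq0, hn, ← pow_add]; congr 1; omega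
  have hqpos : 0 < q := by rw [hq]; positivity
  -- generator memberships
  have hgq : q ∈ A := by
    rw [hA]; exact AddSubmonoid.subset_closure (by simp)
  have hg1 : q + q0 ∈ A := by
    rw [hA]; exact AddSubmonoid.subset_closure (by simp)
  have hg2 : q + qbar ∈ A := by
    rw [hA]; exact AddSubmonoid.subset_closure (by simp)
  have hg3 : q * (n-1) + qbar + 1 ∈ A := by
    rw [hA]; exact AddSubmonoid.subset_closure (by simp)
  have hmulmem : ∀ (a x : ℕ), x ∈ A → a * x ∈ A := by
    intro a x hx
    simpa [nsmul_eq_mul] using AddSubmonoid.nsmul_mem A hx a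
  have hW : ∀ t1 t2 t3 : ℕ,
      t1 * (q + q0) + t2 * (q + qbar) + t3 * (q * (n-1) + qbar + 1) ∈ A := by
    intro t1 t2 t3
    exact A.add_mem (A.add_mem (hmulmem _ _ hg1) (hmulmem _ _ hg2)) (hmulmem _ _ hg3)
  -- every element of A has a normal form
  have hrep : ∀ x ∈ A, ∃ t1 t2 t3 k : ℕ, t1 < n ∧ t2 < q0 ∧ t3 < q0 ∧
      x = t1 * (q + q0) + t2 * (q + qbar) + t3 * (q * (n-1) + qbar + 1) + k * q := by
    intro x hx
    rw [hA] at hx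
    have hcomb : ∃ a0 a1 a2 a3 : ℕ,
        x = a0 * q + a1 * (q + q0) + a2 * (q + qbar) + a3 * (q * (n-1) + qbar + 1) := by
      induction hx using AddSubmonoid.closure_induction with
      | mem y hy =>
        rcases hy with h' | h' | h' | h' <;> subst h'
        · exact ⟨1, 0, 0, 0, by ring⟩
        · exact ⟨0, 1, 0, 0, by ring⟩
        · exact ⟨0, 0, 1, 0, by ring⟩
        · exact ⟨0, 0, 0, 1, by ring⟩
      | zero => exact ⟨0, 0, 0, 0, by ring⟩
      | add y z hy hz ihy ihz =>
        obtain ⟨a0, a1, a2, a3, rfl⟩ := ihy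
        obtain ⟨b0, b1, b2, b3, rfl⟩ := ihz
        exact ⟨a0+b0, a1+b1, a2+b2, a3+b3, by ring⟩
    obtain ⟨a0, a1, a2, a3, rfl⟩ := hcomb
    exact my_red q q0 qbar n hqf hqb hq0pos hnpos a0 a1 a2 a3
  ext x
  simp only [Set.mem_setOf_eq]
  constructor
  · rintro ⟨hxA, hnex⟩
    obtain ⟨t1, t2, t3, k, h1, h2, h3, hx⟩ := hrep x hxA
    rcases Nat.eq_zero_or_pos k with rfl | hk
    · exact ⟨t1, t2, t3, by omega, by omega, by omega, by simpa using hx⟩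
    · exfalso
      apply hnex
      obtain ⟨j, rfl⟩ : ∃ j, k = j + 1 := ⟨k - 1, by omega⟩
      refine ⟨t1 * (q + q0) + t2 * (q + qbar) + t3 * (q * (n-1) + qbar + 1) + j * q,
        A.add_mem (hW t1 t2 t3) (hmulmem _ _ hgq), ?_⟩
      rw [hx]; ring
  · rintro ⟨t1, t2, t3, h1, h2, h3, rfl⟩
    have h1' : t1 < n := by omega
    have h2' : t2 < q0 := by omega
    have h3' : t3 < q0 := by omega
    refine ⟨hW t1 t2 t3, ?_⟩
    rintro ⟨y, hyA, hxy⟩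
    obtain ⟨t1', t2', t3', k, h1'', h2'', h3'', hy⟩ := hrep y hyA
    rw [hy] at hxy
    -- take mod q of both sides
    have hmodeq : (t1 * (q + q0) + t2 * (q + qbar) + t3 * (q * (n-1) + qbar + 1)) % q
        = (t1' * (q + q0) + t2' * (q + qbar) + t3' * (q * (n-1) + qbar + 1)) % q := by
      rw [hxy, show t1' * (q + q0) + t2' * (q + qbar) + t3' * (q * (n-1) + qbar + 1) + k * q + q
          = t1' * (q + q0) + t2' * (q + qbar) + t3' * (q * (n-1) + qbar + 1) + (k+1) * q by ring,
        Nat.add_mul_mod_self_right]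
    rw [my_mod q q0 qbar n hqf hqb hq0pos t1 t2 t3 h1' h2' h3',
        my_mod q q0 qbar n hqf hqb hq0pos t1' t2' t3' h1'' h2'' h3''] at hmodeq
    have hvlt : (t2+t3) % q0 < q0 := Nat.mod_lt _ hq0pos
    have hvlt' : (t2'+t3') % q0 < q0 := Nat.mod_lt _ hq0pos
    obtain ⟨e3, hrest⟩ := my_split q0 t3 t3' _ _ h3' h3'' hmodeq
    obtain ⟨e1, hrest2⟩ := my_split n t1 t1' _ _ h1' h1'' hrest
    subst e3; subst e1
    have e2 : t2 = t2' := by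
      have hmm : (t2 + t3) % q0 = (t2' + t3) % q0 := hrest2
      have : t2 ≡ t2' [MOD q0] := Nat.ModEq.add_right_cancel' t3 hmm
      have := this
      unfold Nat.ModEq at this
      rw [Nat.mod_eq_of_lt h2', Nat.mod_eq_of_lt h2''] at this
      exact this
    subst e2
    linarith [hxy, hqpos, Nat.zero_le (k*q)]
end

section
/- Let S be an additive submonoid of ℕ whose complement ℕ \ S is finite, and let s ∈ S with s ≠ 0. Then the sum of the elements of the Apéry set Ap(S,s) := { x ∈ S : there is no y ∈ S with x = y + s } satisfies ∑_{x ∈ Ap(S,s)} x = s·g(S) + s(s−1)/2, where g(S) is the cardinality of ℕ \ S (the genus of S). -/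
/-- for a numerical semigroup `S` and `0 ≠ s ∈ S`, the sum of the
elements of the Apéry set `Ap(S,s) = { x ∈ S : x − s ∉ S }` equals
`s·g(S) + s(s−1)/2`, where `g(S) = |ℕ \ S|` is the genus of `S`. -/
theorem stmt_17 (S : AddSubmonoid ℕ) (hfin : {m : ℕ | m ∉ S}.Finite)
    (s : ℕ) (hsS : s ∈ S) (hs : s ≠ 0) :
    ∑ᶠ x ∈ {x : ℕ | x ∈ S ∧ ¬∃ y ∈ S, x = y + s}, x
      = s * {m : ℕ | m ∉ S}.ncard + s * (s - 1) / 2 := by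
  classical
  have hs1 : 1 ≤ s := Nat.one_le_iff_ne_zero.mpr hs
  obtain ⟨N, hN⟩ : ∃ N, ∀ n, N ≤ n → n ∈ S := by
    obtain ⟨N, hN⟩ := hfin.bddAbove
    exact ⟨N + 1, fun n hn => by_contra fun h => by have := hN h; omega⟩
  set w : ℕ → ℕ := fun i => sInf {n | n ∈ S ∧ n % s = i} with hwdef
  have hwmem : ∀ i < s, w i ∈ S ∧ w i % s = i := by
    intro i hi
    have hne : {n | n ∈ S ∧ n % s = i}.Nonempty := by
      refine ⟨i + N * s, hN _ ?_, ?_⟩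
      · have : N ≤ N * s := Nat.le_mul_of_pos_right N (by omega)
        omega
      · simp [Nat.add_mul_mod_self_right, Nat.mod_eq_of_lt hi]
    exact Nat.sInf_mem hne
  have hwle : ∀ i, ∀ n, n ∈ S → n % s = i → w i ≤ n :=
    fun i n h1 h2 => Nat.sInf_le ⟨h1, h2⟩
  have hmul : ∀ i < s, ∀ k, w i + k * s ∈ S := by
    intro i hi k
    have : k • s ∈ S := S.nsmul_mem hsS k
    simpa [smul_eq_mul, mul_comm] using S.add_mem (hwmem i hi).1 this
  have hmem_ge : ∀ i < s, ∀ n, n % s = i → w i ≤ n → n ∈ S := by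
    intro i hi n hn hle
    have hmod : w i ≡ n [MOD s] := by
      unfold Nat.ModEq; rw [hn, (hwmem i hi).2]
    obtain ⟨k, hk⟩ := (Nat.modEq_iff_dvd' hle).mp hmod
    have hck : s * k = k * s := mul_comm _ _
    have : n = w i + k * s := by omega
    rw [this]; exact hmul i hi k
  -- the Apéry set equals the image of w over range s
  have hAp : {x : ℕ | x ∈ S ∧ ¬∃ y ∈ S, x = y + s}
      = ↑((Finset.range s).image w) := by
    ext x
    simp only [Set.mem_setOf_eq, Finset.coe_image, Set.mem_image, Finset.mem_coe,
      Finset.mem_range]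
    constructor
    · rintro ⟨hxS, hnex⟩
      refine ⟨x % s, Nat.mod_lt _ (by omega), ?_⟩
      have hle : w (x % s) ≤ x := hwle _ _ hxS rfl
      rcases eq_or_lt_of_le hle with h | h
      · exact h
      · exfalso
        have hi : x % s < s := Nat.mod_lt _ (by omega)
        have hmod : w (x % s) ≡ x [MOD s] := by
          unfold Nat.ModEq; rw [(hwmem _ hi).2]
        obtain ⟨k, hk⟩ := (Nat.modEq_iff_dvd' hle).mp hmod
        have hck : s * k = k * s := mul_comm _ _
        have hk1 : 1 ≤ k := by
          rcases Nat.eq_zero_or_pos k with h0 | h0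
          · subst h0; simp at hk; omega
          · exact h0
        refine hnex ⟨w (x % s) + (k - 1) * s, hmul _ hi _, ?_⟩
        have hks : (k - 1) * s + s = k * s := by
          cases k with
          | zero => omega
          | succ m => simp [Nat.succ_sub_one]; ring
        omega
    · rintro ⟨i, hi, rfl⟩
      refine ⟨(hwmem i hi).1, ?_⟩
      rintro ⟨y, hyS, hy⟩
      have hyi : y % s = i := by
        have : w i % s = i := (hwmem i hi).2
        have h2 : (y + s) % s = y % s := by simp [Nat.add_mod_right]
        rw [hy, h2] at this; exact this
      have := hwle i y hyS hyi
      omega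
  -- turn the finsum into a finset sum
  rw [hAp, finsum_mem_coe_finset]
  have hinj : Set.InjOn w ↑(Finset.range s) := by
    intro a ha b hb hab
    simp only [Finset.coe_range, Set.mem_Iio] at ha hb
    have := (hwmem a ha).2
    rw [hab, (hwmem b hb).2] at this
    omega
  rw [Finset.sum_image (fun a ha b hb => hinj ha hb)]
  -- count gaps fiberwise
  set G := hfin.toFinset with hG
  have hcard : {m : ℕ | m ∉ S}.ncard = G.card := Set.ncard_eq_toFinset_card _ hfin
  have hfiber : ∀ i < s, G.filter (fun m => m % s = i)
      = (Finset.range (w i / s)).image (fun j => j * s + i) := by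
    intro i hi
    have hwdecomp : s * (w i / s) + i = w i := by
      conv_rhs => rw [← Nat.div_add_mod (w i) s, (hwmem i hi).2]
    ext m
    simp only [Finset.mem_filter, Finset.mem_image, Finset.mem_range,
      Set.Finite.mem_toFinset, Set.mem_setOf_eq, hG]
    constructor
    · rintro ⟨hmS, hmi⟩
      have hlt : m < w i := by
        by_contra h
        exact hmS (hmem_ge i hi m hmi (by omega))
      have h1 : s * (m / s) + i = m := by
        conv_rhs => rw [← Nat.div_add_mod m s, hmi]
      refine ⟨m / s, ?_, ?_⟩
      · have hmul1 : s * (m / s) < s * (w i / s) := by omega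
        exact Nat.lt_of_mul_lt_mul_left hmul1
      · have hcm : m / s * s = s * (m / s) := mul_comm _ _
        omega
    · rintro ⟨j, hj, rfl⟩
      have hmi : (j * s + i) % s = i := by
        rw [add_comm, Nat.add_mul_mod_self_right]
        exact Nat.mod_eq_of_lt hi
      have h2 : (j + 1) * s ≤ (w i / s) * s := Nat.mul_le_mul_right _ hj
      have h3 : (w i / s) * s = s * (w i / s) := mul_comm _ _
      have h4 : (j + 1) * s = j * s + s := by ring
      have hlt : j * s + i < w i := by omega
      refine ⟨fun hmem => ?_, hmi⟩
      have := hwle i _ hmem hmi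
      omega
  have hGcard : G.card = ∑ i ∈ Finset.range s, w i / s := by
    rw [Finset.card_eq_sum_card_fiberwise (f := fun m => m % s)
      (t := Finset.range s) (fun x _ => Finset.mem_range.mpr (Nat.mod_lt _ (by omega)))]
    refine Finset.sum_congr rfl fun i hi => ?_
    rw [hfiber i (Finset.mem_range.mp hi)]
    rw [Finset.card_image_of_injective _ (fun a b hab => by
      have hab' : a * s + i = b * s + i := hab
      exact Nat.eq_of_mul_eq_mul_right (by omega) (by omega : a * s = b * s))]
    rw [Finset.card_range]
  have hsum : ∑ i ∈ Finset.range s, w i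
      = s * ∑ i ∈ Finset.range s, w i / s + ∑ i ∈ Finset.range s, i := by
    rw [Finset.mul_sum, ← Finset.sum_add_distrib]
    refine Finset.sum_congr rfl fun i hi => ?_
    have hi' := Finset.mem_range.mp hi
    conv_lhs => rw [← Nat.div_add_mod (w i) s, (hwmem i hi').2]
  rw [hsum, hcard, hGcard, Finset.sum_range_id]
end
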